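/- arXiv:math/0701683 — 4 statements merged into one kernel-verified Lean document; each statement's English description precedes it below -/
import Mathlib

section
/- Let X be a finite-dimensional ℚ-super vector space. There exists n ≥ 1 with Alt^n(X) = Λ^n X = 0 if and only if the odd part of X is zero; and there exists n ≥ 1 with Sym^n(X) = 0 if and only if the even part of X is zero. -/
open scoped TensorProduct BigOperators

noncomputable section

/-- The Koszul sign of a permutation `σ` acting on homogeneous elements whose
parities are given by `p : Fin n → ZMod 2`: a factor `-1` for every inversion
of `σ` at a pair of odd positions. -/
def koszulSign {n : ℕ} (σ : Equiv.Perm (Fin n)) (p : Fin n → ZMod 2) : ℚ :=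
  ∏ i : Fin n, ∏ j : Fin n,
    if i < j ∧ σ j < σ i ∧ p i = 1 ∧ p j = 1 then (-1 : ℚ) else 1

/-- A super (`ℤ/2`-graded) structure on a `ℚ`-vector space: a decomposition
into an even and an odd part. -/
structure SuperStructure (X : Type*) [AddCommGroup X] [Module ℚ X] where
  even : Submodule ℚ X
  odd : Submodule ℚ X
  isCompl : IsCompl even odd

namespace SuperStructure

variable {X : Type*} [AddCommGroup X] [Module ℚ X]

/-- The homogeneous component of parity `p`. -/
def hom (S : SuperStructure X) (p : ZMod 2) : Submodule ℚ X :=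
  if p = 0 then S.even else S.odd

/-- The parity change functor `Π`: swap the even and odd parts. -/
def parityShift (S : SuperStructure X) : SuperStructure X :=
  ⟨S.odd, S.even, S.isCompl.symm⟩

end SuperStructure

/-- `ρ` is the action of the symmetric group `Σ_n` on the `n`-th tensor power
of `X` with the Koszul sign rule (with respect to the super structure `S`):
on pure tensors of homogeneous elements it permutes the factors and introduces
the Koszul sign. -/
def IsKoszulAction {X : Type*} [AddCommGroup X] [Module ℚ X] (S : SuperStructure X)
    (n : ℕ) (ρ : Equiv.Perm (Fin n) →* Module.End ℚ (⨂[ℚ]^n X)) : Prop :=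
  ∀ (σ : Equiv.Perm (Fin n)) (p : Fin n → ZMod 2) (x : Fin n → X),
    (∀ i, x i ∈ S.hom (p i)) →
      ρ σ (PiTensorProduct.tprod ℚ x) =
        koszulSign σ p • PiTensorProduct.tprod ℚ (fun i => x (σ⁻¹ i))

/-- The algebra morphism `ℚ[Σ_n] → End(X^{⊗n})` induced by an action `ρ`. -/
def actionAlg {X : Type*} [AddCommGroup X] [Module ℚ X] {n : ℕ}
    (ρ : Equiv.Perm (Fin n) →* Module.End ℚ (⨂[ℚ]^n X)) :
    MonoidAlgebra ℚ (Equiv.Perm (Fin n)) →ₐ[ℚ] Module.End ℚ (⨂[ℚ]^n X) :=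
  MonoidAlgebra.lift ℚ _ _ ρ

/-- The symmetrizing idempotent `(1/n!) Σ_σ σ` of `ℚ[Σ_n]`. -/
def symElem (n : ℕ) : MonoidAlgebra ℚ (Equiv.Perm (Fin n)) :=
  ((n.factorial : ℚ))⁻¹ • ∑ σ : Equiv.Perm (Fin n), MonoidAlgebra.of ℚ _ σ

/-- The antisymmetrizing idempotent `(1/n!) Σ_σ ε(σ) σ` of `ℚ[Σ_n]`. -/
def altElem (n : ℕ) : MonoidAlgebra ℚ (Equiv.Perm (Fin n)) :=
  ((n.factorial : ℚ))⁻¹ • ∑ σ : Equiv.Perm (Fin n),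
    (((Equiv.Perm.sign σ : ℤ) : ℚ)) • MonoidAlgebra.of ℚ _ σ

/-- `Sym^n(X)`, the image of the symmetrizing idempotent on `X^{⊗n}`. -/
def SymPow {X : Type*} [AddCommGroup X] [Module ℚ X] (n : ℕ)
    (ρ : Equiv.Perm (Fin n) →* Module.End ℚ (⨂[ℚ]^n X)) : Submodule ℚ (⨂[ℚ]^n X) :=
  LinearMap.range (actionAlg ρ (symElem n))

/-- `Alt^n(X) = Λ^n(X)`, the image of the antisymmetrizing idempotent on `X^{⊗n}`. -/
def AltPow {X : Type*} [AddCommGroup X] [Module ℚ X] (n : ℕ)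
    (ρ : Equiv.Perm (Fin n) →* Module.End ℚ (⨂[ℚ]^n X)) : Submodule ℚ (⨂[ℚ]^n X) :=
  LinearMap.range (actionAlg ρ (altElem n))

/-- The row-symmetrizing element `a_μ = Σ_{σ row-preserving} σ` of the Young
symmetrizer, for the tableau given by the bijection `e`. -/
def rowElem (μ : YoungDiagram) (e : Fin μ.cells.card ≃ μ.cells) :
    MonoidAlgebra ℚ (Equiv.Perm (Fin μ.cells.card)) :=
  ∑ σ ∈ Finset.univ.filter
      (fun σ : Equiv.Perm (Fin μ.cells.card) =>
        ∀ i, ((e (σ i)) : ℕ × ℕ).1 = ((e i) : ℕ × ℕ).1),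
    MonoidAlgebra.of ℚ _ σ

/-- The column-antisymmetrizing element `b_μ = Σ_{σ column-preserving} ε(σ) σ`. -/
def colElem (μ : YoungDiagram) (e : Fin μ.cells.card ≃ μ.cells) :
    MonoidAlgebra ℚ (Equiv.Perm (Fin μ.cells.card)) :=
  ∑ σ ∈ Finset.univ.filter
      (fun σ : Equiv.Perm (Fin μ.cells.card) =>
        ∀ i, ((e (σ i)) : ℕ × ℕ).2 = ((e i) : ℕ × ℕ).2),
    (((Equiv.Perm.sign σ : ℤ) : ℚ)) • MonoidAlgebra.of ℚ _ σ

/-- The Young symmetrizer `c_μ = a_μ · b_μ ∈ ℚ[Σ_n]`. -/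
def youngSym (μ : YoungDiagram) (e : Fin μ.cells.card ≃ μ.cells) :
    MonoidAlgebra ℚ (Equiv.Perm (Fin μ.cells.card)) :=
  rowElem μ e * colElem μ e

/-- The Schur functor `S_μ(X)`: the image of the Young symmetrizer `c_μ`
acting on `X^{⊗|μ|}`. -/
def SchurPow {X : Type*} [AddCommGroup X] [Module ℚ X] (μ : YoungDiagram)
    (e : Fin μ.cells.card ≃ μ.cells)
    (ρ : Equiv.Perm (Fin μ.cells.card) →* Module.End ℚ (⨂[ℚ]^μ.cells.card X)) :
    Submodule ℚ (⨂[ℚ]^μ.cells.card X) :=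
  LinearMap.range (actionAlg ρ (youngSym μ e))

end

noncomputable section Aux

lemma prod_ite_neg {α M : Type*} [CommMonoid M] (s : Finset α) (P : α → Prop)
    [DecidablePred P] (a : M) :
    (∏ x ∈ s, if P x then a else 1) = a ^ (s.filter P).card := by
  rw [Finset.prod_ite, Finset.prod_const, Finset.prod_const, one_pow, mul_one]

lemma signAux_eq_sign {n : ℕ} (σ : Equiv.Perm (Fin n)) :
    Equiv.Perm.signAux σ = Equiv.Perm.sign σ := by
  refine Equiv.Perm.swap_induction_on σ ?_ ?_
  · simp [Equiv.Perm.signAux_one]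
  · intro f x y hxy ih
    rw [Equiv.Perm.signAux_mul, Equiv.Perm.signAux_swap hxy, map_mul,
      Equiv.Perm.sign_swap hxy, ih]

lemma koszulSign_card_eq {n : ℕ} (σ : Equiv.Perm (Fin n)) :
    ((Finset.univ ×ˢ Finset.univ).filter
      (fun x : Fin n × Fin n => x.1 < x.2 ∧ σ x.2 < σ x.1)).card
    = ((Equiv.Perm.finPairsLT n).filter
      (fun x : Σ _ : Fin n, Fin n => σ x.1 ≤ σ x.2)).card := by
  refine Finset.card_bij (fun x _ => ⟨x.2, x.1⟩) ?_ ?_ ?_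
  · intro a ha
    rw [Finset.mem_filter] at ha ⊢
    obtain ⟨-, h1, h2⟩ := ha
    exact ⟨Equiv.Perm.mem_finPairsLT.2 h1, le_of_lt h2⟩
  · intro a _ b _ h
    simp only [Sigma.mk.inj_iff, heq_eq_eq] at h
    exact Prod.ext h.2 h.1
  · intro y hy
    rw [Finset.mem_filter] at hy
    obtain ⟨hmem, hle⟩ := hy
    have hlt := Equiv.Perm.mem_finPairsLT.1 hmem
    have hne : σ y.1 ≠ σ y.2 := fun h => hlt.ne (σ.injective h).symm
    refine ⟨(y.2, y.1), Finset.mem_filter.2 ⟨Finset.mem_product.2 ⟨Finset.mem_univ _,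
      Finset.mem_univ _⟩, hlt, lt_of_le_of_ne hle hne⟩, rfl⟩

lemma koszulSign_allOdd {n : ℕ} (σ : Equiv.Perm (Fin n)) :
    koszulSign σ (fun _ => 1) = ((Equiv.Perm.sign σ : ℤ) : ℚ) := by
  have h1 : koszulSign σ (fun _ => 1) =
      (-1 : ℚ) ^ (((Finset.univ ×ˢ Finset.univ).filter
        (fun x : Fin n × Fin n => x.1 < x.2 ∧ σ x.2 < σ x.1)).card) := by
    rw [koszulSign]
    simp only [eq_self_iff_true, and_true]
    rw [← Finset.prod_product']
    exact prod_ite_neg _ _ _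
  have h2 : Equiv.Perm.sign σ =
      (-1 : ℤˣ) ^ (((Equiv.Perm.finPairsLT n).filter
        (fun x : Σ _ : Fin n, Fin n => σ x.1 ≤ σ x.2)).card) := by
    rw [← signAux_eq_sign, Equiv.Perm.signAux]
    exact prod_ite_neg _ _ _
  rw [h1, koszulSign_card_eq σ, h2]
  push_cast [Units.val_pow_eq_pow_val]
  norm_num

lemma koszulSign_allEven {n : ℕ} (σ : Equiv.Perm (Fin n)) :
    koszulSign σ (fun _ => 0) = 1 := by
  simp [koszulSign, (by decide : ¬ ((0 : ZMod 2) = 1))]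

lemma actionAlg_altElem_apply {X : Type*} [AddCommGroup X] [Module ℚ X] {n : ℕ}
    (ρ : Equiv.Perm (Fin n) →* Module.End ℚ (⨂[ℚ]^n X)) (t : ⨂[ℚ]^n X) :
    actionAlg ρ (altElem n) t = ((n.factorial : ℚ))⁻¹ •
      ∑ σ : Equiv.Perm (Fin n), ((Equiv.Perm.sign σ : ℤ) : ℚ) • ρ σ t := by
  simp only [altElem, actionAlg, map_smul, map_sum, MonoidAlgebra.lift_of,
    LinearMap.smul_apply, LinearMap.sum_apply]

lemma actionAlg_symElem_apply {X : Type*} [AddCommGroup X] [Module ℚ X] {n : ℕ}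
    (ρ : Equiv.Perm (Fin n) →* Module.End ℚ (⨂[ℚ]^n X)) (t : ⨂[ℚ]^n X) :
    actionAlg ρ (symElem n) t = ((n.factorial : ℚ))⁻¹ •
      ∑ σ : Equiv.Perm (Fin n), ρ σ t := by
  simp only [symElem, actionAlg, map_smul, map_sum, MonoidAlgebra.lift_of,
    LinearMap.smul_apply, LinearMap.sum_apply]

lemma tprod_const_ne_zero {X : Type*} [AddCommGroup X] [Module ℚ X] {v : X}
    (hv : v ≠ 0) (n : ℕ) :
    (PiTensorProduct.tprod ℚ (fun _ : Fin n => v) : ⨂[ℚ]^n X) ≠ 0 := by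
  obtain ⟨g, hg⟩ := (LinearMap.toSpanSingleton ℚ X v).exists_leftInverse_of_injective
    (LinearMap.ker_toSpanSingleton ℚ hv)
  have hgv : g v = 1 := by
    have := LinearMap.congr_fun hg 1
    simpa [LinearMap.toSpanSingleton_apply_one] using this
  intro h
  have := congrArg (PiTensorProduct.lift
    ((MultilinearMap.mkPiAlgebra ℚ (Fin n) ℚ).compLinearMap fun _ => g)) h
  simp [PiTensorProduct.lift.tprod, hgv] at this

lemma sum_sign_smul_tprod_eq_zero {X : Type*} [AddCommGroup X] [Module ℚ X]
    {n d : ℕ} (hdn : d < n) (w : Fin d → X) (f : Fin n → Fin d) :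
    ∑ σ : Equiv.Perm (Fin n), ((Equiv.Perm.sign σ : ℤ) : ℚ) •
      (PiTensorProduct.tprod ℚ (fun i => w (f (σ⁻¹ i))) : ⨂[ℚ]^n X) = 0 := by
  obtain ⟨i0, j0, hne, hfij⟩ : ∃ i0 j0 : Fin n, i0 ≠ j0 ∧ f i0 = f j0 :=
    Fintype.exists_ne_map_eq_of_card_lt f (by simpa using hdn)
  have hswap : ∀ k, f (Equiv.swap i0 j0 k) = f k := by
    intro k
    rcases eq_or_ne k i0 with rfl | h1
    · rw [Equiv.swap_apply_left, hfij]
    rcases eq_or_ne k j0 with rfl | h2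
    · rw [Equiv.swap_apply_right, hfij]
    · rw [Equiv.swap_apply_of_ne_of_ne h1 h2]
  refine Finset.sum_ninvolution (fun σ => σ * Equiv.swap i0 j0) ?_ ?_
    (fun _ => Finset.mem_univ _) ?_
  · intro σ
    have htensor : (fun i => w (f ((σ * Equiv.swap i0 j0)⁻¹ i)))
        = fun i => w (f (σ⁻¹ i)) := by
      funext i
      rw [mul_inv_rev, Equiv.Perm.mul_apply, Equiv.swap_inv, hswap]
    rw [htensor, map_mul, Equiv.Perm.sign_swap hne]
    have hcast : (((Equiv.Perm.sign σ * -1 : ℤˣ) : ℤ) : ℚ)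
        = -(((Equiv.Perm.sign σ : ℤˣ) : ℤ) : ℚ) := by push_cast; ring
    rw [hcast, ← add_smul]
    simp
  · intro σ _ hmul
    apply hne
    have hmul' : σ * Equiv.swap i0 j0 = σ := hmul
    have h1 : Equiv.swap i0 j0 = 1 :=
      mul_left_cancel (a := σ) (by rw [hmul', mul_one])
    exact (Equiv.swap_eq_one_iff).1 h1
  · intro σ
    show σ * Equiv.swap i0 j0 * Equiv.swap i0 j0 = σ
    rw [mul_assoc, Equiv.swap_mul_self, mul_one]

end Aux

/-- For a finite-dimensional `ℚ`-super vector space `X` (with the symmetric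
groups acting on tensor powers by the Koszul sign rule): there exists `n ≥ 1`
with `Alt^n(X) = 0` if and only if the odd part of `X` is zero, and there
exists `n ≥ 1` with `Sym^n(X) = 0` if and only if the even part of `X` is
zero. -/


theorem exists_altPow_eq_bot_iff {X : Type} [AddCommGroup X] [Module ℚ X]
    [FiniteDimensional ℚ X] (S : SuperStructure X)
    (ρ : ∀ n : ℕ, Equiv.Perm (Fin n) →* Module.End ℚ (⨂[ℚ]^n X))
    (hρ : ∀ n, IsKoszulAction S n (ρ n)) :
    ((∃ n, 1 ≤ n ∧ AltPow n (ρ n) = ⊥) ↔ S.odd = ⊥) ∧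
    ((∃ n, 1 ≤ n ∧ SymPow n (ρ n) = ⊥) ↔ S.even = ⊥) := by
  have hfac : ∀ n : ℕ, ((n.factorial : ℚ)) ≠ 0 :=
    fun n => Nat.cast_ne_zero.2 (Nat.factorial_ne_zero n)
  constructor
  · constructor
    · rintro ⟨n, -, hbot⟩
      by_contra hodd
      obtain ⟨v, hvmem, hv⟩ := (Submodule.ne_bot_iff _).1 hodd
      have hmem : ∀ i : Fin n,
          (fun _ : Fin n => v) i ∈ S.hom ((fun _ => (1 : ZMod 2)) i) := fun i => by
        simpa [SuperStructure.hom, if_neg (show ¬ ((1 : ZMod 2) = 0) by decide)] using hvmem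
      have key : actionAlg (ρ n) (altElem n)
          (PiTensorProduct.tprod ℚ (fun _ : Fin n => v)) =
          PiTensorProduct.tprod ℚ (fun _ : Fin n => v) := by
        rw [actionAlg_altElem_apply]
        have hterm : ∀ σ : Equiv.Perm (Fin n),
            ((Equiv.Perm.sign σ : ℤ) : ℚ) • (ρ n) σ
              (PiTensorProduct.tprod ℚ (fun _ : Fin n => v)) =
            PiTensorProduct.tprod ℚ (fun _ : Fin n => v) := by
          intro σ
          rw [hρ n σ (fun _ => 1) _ hmem, koszulSign_allOdd, smul_smul]
          have h2 : ((Equiv.Perm.sign σ : ℤ) : ℚ) * ((Equiv.Perm.sign σ : ℤ) : ℚ) = 1 := by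
            rcases Int.units_eq_one_or (Equiv.Perm.sign σ) with h | h <;> rw [h] <;> norm_num
          rw [h2, one_smul]
        rw [Finset.sum_congr rfl fun σ _ => hterm σ, Finset.sum_const, Finset.card_univ,
          Fintype.card_perm, Fintype.card_fin, ← Nat.cast_smul_eq_nsmul ℚ, smul_smul,
          inv_mul_cancel₀ (hfac n), one_smul]
      have hmem2 : PiTensorProduct.tprod ℚ (fun _ : Fin n => v) ∈ AltPow n (ρ n) :=
        LinearMap.mem_range.2 ⟨_, key⟩
      rw [hbot, Submodule.mem_bot] at hmem2
      exact tprod_const_ne_zero hv n hmem2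
    · intro hodd
      have heven : S.even = ⊤ := by
        have h := codisjoint_iff.1 S.isCompl.codisjoint
        rwa [hodd, sup_bot_eq] at h
      refine ⟨Module.finrank ℚ X + 1, by omega, ?_⟩
      rw [AltPow, LinearMap.range_eq_bot]
      apply PiTensorProduct.ext
      refine Module.Basis.ext_multilinear (fun _ => Module.finBasis ℚ X) fun g => ?_
      simp only [LinearMap.compMultilinearMap_apply, LinearMap.zero_apply]
      rw [actionAlg_altElem_apply]
      have hmem : ∀ i : Fin (Module.finrank ℚ X + 1),
          (fun i => (Module.finBasis ℚ X) (g i)) i ∈ S.hom ((fun _ => (0 : ZMod 2)) i) :=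
        fun i => by simp [SuperStructure.hom, heven]
      have hact : ∀ σ : Equiv.Perm (Fin (Module.finrank ℚ X + 1)),
          (ρ _) σ (PiTensorProduct.tprod ℚ (fun i => (Module.finBasis ℚ X) (g i))) =
          PiTensorProduct.tprod ℚ (fun i => (Module.finBasis ℚ X) (g (σ⁻¹ i))) := by
        intro σ
        rw [hρ _ σ (fun _ => 0) _ hmem, koszulSign_allEven, one_smul]
      rw [Finset.sum_congr rfl fun σ _ => by rw [hact σ],
        sum_sign_smul_tprod_eq_zero (Nat.lt_succ_self _) (Module.finBasis ℚ X) g, smul_zero]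
  · constructor
    · rintro ⟨n, -, hbot⟩
      by_contra heven
      obtain ⟨v, hvmem, hv⟩ := (Submodule.ne_bot_iff _).1 heven
      have hmem : ∀ i : Fin n,
          (fun _ : Fin n => v) i ∈ S.hom ((fun _ => (0 : ZMod 2)) i) := fun i => by
        simpa [SuperStructure.hom] using hvmem
      have key : actionAlg (ρ n) (symElem n)
          (PiTensorProduct.tprod ℚ (fun _ : Fin n => v)) =
          PiTensorProduct.tprod ℚ (fun _ : Fin n => v) := by
        rw [actionAlg_symElem_apply]
        have hterm : ∀ σ : Equiv.Perm (Fin n),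
            (ρ n) σ (PiTensorProduct.tprod ℚ (fun _ : Fin n => v)) =
            PiTensorProduct.tprod ℚ (fun _ : Fin n => v) := by
          intro σ
          rw [hρ n σ (fun _ => 0) _ hmem, koszulSign_allEven, one_smul]
        rw [Finset.sum_congr rfl fun σ _ => hterm σ, Finset.sum_const, Finset.card_univ,
          Fintype.card_perm, Fintype.card_fin, ← Nat.cast_smul_eq_nsmul ℚ, smul_smul,
          inv_mul_cancel₀ (hfac n), one_smul]
      have hmem2 : PiTensorProduct.tprod ℚ (fun _ : Fin n => v) ∈ SymPow n (ρ n) :=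
        LinearMap.mem_range.2 ⟨_, key⟩
      rw [hbot, Submodule.mem_bot] at hmem2
      exact tprod_const_ne_zero hv n hmem2
    · intro heven
      have hodd : S.odd = ⊤ := by
        have h := codisjoint_iff.1 S.isCompl.codisjoint
        rwa [heven, bot_sup_eq] at h
      refine ⟨Module.finrank ℚ X + 1, by omega, ?_⟩
      rw [SymPow, LinearMap.range_eq_bot]
      apply PiTensorProduct.ext
      refine Module.Basis.ext_multilinear (fun _ => Module.finBasis ℚ X) fun g => ?_
      simp only [LinearMap.compMultilinearMap_apply, LinearMap.zero_apply]
      rw [actionAlg_symElem_apply]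
      have hmem : ∀ i : Fin (Module.finrank ℚ X + 1),
          (fun i => (Module.finBasis ℚ X) (g i)) i ∈ S.hom ((fun _ => (1 : ZMod 2)) i) :=
        fun i => by
          simp [SuperStructure.hom, if_neg (show ¬ ((1 : ZMod 2) = 0) by decide), hodd]
      have hact : ∀ σ : Equiv.Perm (Fin (Module.finrank ℚ X + 1)),
          (ρ _) σ (PiTensorProduct.tprod ℚ (fun i => (Module.finBasis ℚ X) (g i))) =
          ((Equiv.Perm.sign σ : ℤ) : ℚ) •
            PiTensorProduct.tprod ℚ (fun i => (Module.finBasis ℚ X) (g (σ⁻¹ i))) := by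
        intro σ
        rw [hρ _ σ (fun _ => 1) _ hmem, koszulSign_allOdd]
      rw [Finset.sum_congr rfl fun σ _ => by rw [hact σ],
        sum_sign_smul_tprod_eq_zero (Nat.lt_succ_self _) (Module.finBasis ℚ X) g, smul_zero]
end

section
/- If X is a finite-dimensional ℚ-super vector space with Alt^n(X) = 0 and Sym^n(X) = 0 for the same n ≥ 1, then X = 0. -/
open scoped TensorProduct BigOperators

section AuxLemmas

theorem sign_eq_signAux' {n : ℕ} (σ : Equiv.Perm (Fin n)) :
    Equiv.Perm.sign σ = Equiv.Perm.signAux σ :=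
  Equiv.Perm.swap_induction_on σ (by simp [Equiv.Perm.signAux_one])
    (fun f x y hxy ih => by
      rw [map_mul, Equiv.Perm.signAux_mul, ih, Equiv.Perm.sign_swap hxy,
        Equiv.Perm.signAux_swap hxy])

theorem koszulSign_const_zero {n : ℕ} (σ : Equiv.Perm (Fin n)) :
    koszulSign σ (fun _ => (0 : ZMod 2)) = 1 := by
  unfold koszulSign
  simp

theorem koszulSign_const_one {n : ℕ} (σ : Equiv.Perm (Fin n)) :
    koszulSign σ (fun _ => (1 : ZMod 2)) = ((Equiv.Perm.sign σ : ℤ) : ℚ) := by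
  rw [sign_eq_signAux']
  unfold koszulSign Equiv.Perm.signAux
  simp only [and_true]
  rw [show (∏ i : Fin n, ∏ j : Fin n, if i < j ∧ σ j < σ i then (-1:ℚ) else 1) = ∏ x ∈ (Finset.univ.sigma fun _ : Fin n => (Finset.univ : Finset (Fin n))), (if x.1 < x.2 ∧ σ x.2 < σ x.1 then (-1:ℚ) else 1) from (Finset.prod_sigma Finset.univ (fun _ : Fin n => (Finset.univ : Finset (Fin n))) (fun x => if x.1 < x.2 ∧ σ x.2 < σ x.1 then (-1:ℚ) else 1)).symm]
  simp only [Units.coe_prod, Int.cast_prod, apply_ite (Units.val : ℤˣ → ℤ),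
    apply_ite (Int.cast : ℤ → ℚ), Units.val_one, Units.val_neg, Int.cast_one, Int.cast_neg]
  rw [Finset.prod_ite, Finset.prod_ite]
  simp only [Finset.prod_const, Finset.prod_const_one, one_pow, mul_one]
  have hc : (Finset.filter (fun x : Σ _ : Fin n, Fin n => x.1 < x.2 ∧ σ x.2 < σ x.1)
        (Finset.univ.sigma fun _ => Finset.univ)).card =
      (Finset.filter (fun x : Σ _ : Fin n, Fin n => σ x.1 ≤ σ x.2)
        (Equiv.Perm.finPairsLT n)).card := by
    refine Finset.card_nbij' (fun x => ⟨x.2, x.1⟩) (fun x => ⟨x.2, x.1⟩) ?_ ?_ ?_ ?_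
    · rintro ⟨a, b⟩ hab
      simp only [Finset.mem_coe, Finset.mem_filter, Finset.mem_sigma, Finset.mem_univ, true_and] at hab
      simp only [Finset.mem_coe, Finset.mem_filter, Equiv.Perm.mem_finPairsLT]
      exact ⟨hab.1, le_of_lt hab.2⟩
    · rintro ⟨a, b⟩ hab
      simp only [Finset.mem_coe, Finset.mem_filter, Equiv.Perm.mem_finPairsLT] at hab
      simp only [Finset.mem_coe, Finset.mem_filter, Finset.mem_sigma, Finset.mem_univ, true_and]
      refine ⟨hab.1, lt_of_le_of_ne hab.2 ?_⟩
      intro h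
      exact absurd (σ.injective h) (ne_of_gt hab.1)
    · rintro ⟨a, b⟩ _; rfl
    · rintro ⟨a, b⟩ _; rfl
  rw [hc]

end AuxLemmas

/-- If `X` is a finite-dimensional `ℚ`-super vector space with
`Alt^n(X) = 0` and `Sym^n(X) = 0` for the same `n ≥ 1`, then `X = 0`. -/
theorem eq_zero_of_altPow_eq_bot_of_symPow_eq_bot {X : Type} [AddCommGroup X]
    [Module ℚ X] [FiniteDimensional ℚ X] (S : SuperStructure X) (n : ℕ)
    (hn : 1 ≤ n) (ρ : Equiv.Perm (Fin n) →* Module.End ℚ (⨂[ℚ]^n X))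
    (hρ : IsKoszulAction S n ρ)
    (halt : AltPow n ρ = ⊥) (hsym : SymPow n ρ = ⊥) :
    ∀ x : X, x = 0 := by
  have hfact : ((n.factorial : ℚ)) ≠ 0 := Nat.cast_ne_zero.mpr (Nat.factorial_ne_zero n)
  have key : ∀ (p : ZMod 2) (y : X), y ∈ S.hom p → y = 0 := by
    intro p y hy
    by_contra hy0
    obtain ⟨φ, hφ⟩ : ∃ φ : Module.Dual ℚ X, φ y ≠ 0 := by
      by_contra h
      push_neg at h
      exact hy0 ((Module.forall_dual_apply_eq_zero_iff ℚ y).mp h)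
    set t : ⨂[ℚ]^n X := PiTensorProduct.tprod ℚ (fun _ : Fin n => y) with ht
    have htρ : ∀ σ : Equiv.Perm (Fin n), ρ σ t = koszulSign σ (fun _ => p) • t :=
      fun σ => hρ σ (fun _ => p) (fun _ => y) (fun _ => hy)
    have ht0 : t ≠ 0 := by
      intro h
      apply hφ
      have h2 := congrArg (PiTensorProduct.lift
        ((MultilinearMap.mkPiAlgebra ℚ (Fin n) ℚ).compLinearMap fun _ => φ)) h
      rw [ht] at h2
      simp only [PiTensorProduct.lift.tprod, MultilinearMap.compLinearMap_apply,
        MultilinearMap.mkPiAlgebra_apply, Finset.prod_const, Finset.card_univ,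
        Fintype.card_fin, map_zero] at h2
      exact pow_eq_zero_iff (Nat.one_le_iff_ne_zero.mp hn) |>.mp h2
    have hsum : ∀ c : Equiv.Perm (Fin n) → ℚ,
        (actionAlg ρ (((n.factorial : ℚ))⁻¹ •
          ∑ σ : Equiv.Perm (Fin n), c σ • MonoidAlgebra.of ℚ _ σ)) t =
        ((n.factorial : ℚ))⁻¹ • ∑ σ : Equiv.Perm (Fin n), c σ • (ρ σ t) := by
      intro c
      rw [map_smul, map_sum]
      simp only [map_smul, MonoidAlgebra.lift_of, actionAlg]
      rw [LinearMap.smul_apply, LinearMap.coe_sum, Finset.sum_apply]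
      simp only [LinearMap.smul_apply]
    have hp : p = 0 ∨ p = 1 := by
      have : ∀ q : ZMod 2, q = 0 ∨ q = 1 := by decide
      exact this p
    have hcard : (Fintype.card (Equiv.Perm (Fin n)) : ℚ) = (n.factorial : ℚ) := by
      rw [Fintype.card_perm, Fintype.card_fin]
    rcases hp with hp | hp
    · -- even case: t ∈ SymPow
      have hact : (actionAlg ρ (symElem n)) t = t := by
        have h1 : symElem n = ((n.factorial : ℚ))⁻¹ •
            ∑ σ : Equiv.Perm (Fin n), (1 : ℚ) • MonoidAlgebra.of ℚ _ σ := by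
          simp [symElem]
        rw [h1, hsum]
        simp only [one_smul]
        have h2 : ∀ σ : Equiv.Perm (Fin n), ρ σ t = t := by
          intro σ
          rw [htρ σ, hp, koszulSign_const_zero, one_smul]
        rw [Finset.sum_congr rfl (fun σ _ => h2 σ), Finset.sum_const, Finset.card_univ,
          ← Nat.cast_smul_eq_nsmul ℚ, smul_smul, hcard, inv_mul_cancel₀ hfact, one_smul]
      have : t ∈ SymPow n ρ := ⟨t, hact⟩
      rw [hsym, Submodule.mem_bot] at this
      exact ht0 this
    · -- odd case: t ∈ AltPow
      have hact : (actionAlg ρ (altElem n)) t = t := by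
        rw [altElem, hsum]
        have h2 : ∀ σ : Equiv.Perm (Fin n),
            ((Equiv.Perm.sign σ : ℤ) : ℚ) • (ρ σ t) = t := by
          intro σ
          rw [htρ σ, hp, koszulSign_const_one, smul_smul]
          have : ((Equiv.Perm.sign σ : ℤ) : ℚ) * ((Equiv.Perm.sign σ : ℤ) : ℚ) = 1 := by
            rcases Int.units_eq_one_or (Equiv.Perm.sign σ) with h | h <;> rw [h] <;> norm_num
          rw [this, one_smul]
        rw [Finset.sum_congr rfl (fun σ _ => h2 σ), Finset.sum_const, Finset.card_univ,
          ← Nat.cast_smul_eq_nsmul ℚ, smul_smul, hcard, inv_mul_cancel₀ hfact, one_smul]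
      have : t ∈ AltPow n ρ := ⟨t, hact⟩
      rw [halt, Submodule.mem_bot] at this
      exact ht0 this
  intro x
  have hx : x ∈ S.even ⊔ S.odd := by
    rw [S.isCompl.sup_eq_top]; trivial
  obtain ⟨a, ha, b, hb, rfl⟩ := Submodule.mem_sup.mp hx
  have ha0 : a = 0 := key 0 a (by simpa [SuperStructure.hom] using ha)
  have hb0 : b = 0 := key 1 b (by simp only [SuperStructure.hom]; norm_num; exact hb)
  rw [ha0, hb0, add_zero]
end

section
/- Let X be a super vector space over ℚ and let d = dim X. Then S_μ(X) = 0 for every partition μ whose Young diagram satisfies [μ] ⊇ [1, d+1] × [1, d+1]. -/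
open scoped TensorProduct BigOperators

/-! ### Auxiliary lemmas -/

section Aux

/-- The Koszul sign of a transposition of two even positions is `1`. -/
lemma koszulSign_swap_even {n : ℕ} {i j : Fin n} {p : Fin n → ZMod 2}
    (hi : p i = 0) (hj : p j = 0) :
    koszulSign (Equiv.swap i j) p = 1 := by
  unfold koszulSign
  refine Finset.prod_eq_one fun a _ => Finset.prod_eq_one fun b _ => ?_
  rw [if_neg]
  rintro ⟨hab, hba, ha1, hb1⟩
  have h0 : (0 : ZMod 2) ≠ 1 := by decide
  have hai : a ≠ i := by rintro rfl; rw [hi] at ha1; exact h0 ha1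
  have haj : a ≠ j := by rintro rfl; rw [hj] at ha1; exact h0 ha1
  have hbi : b ≠ i := by rintro rfl; rw [hi] at hb1; exact h0 hb1
  have hbj : b ≠ j := by rintro rfl; rw [hj] at hb1; exact h0 hb1
  rw [Equiv.swap_apply_of_ne_of_ne hai haj, Equiv.swap_apply_of_ne_of_ne hbi hbj] at hba
  exact absurd hba (not_lt.mpr hab.le)

lemma koszulSign_swap_odd_lt {n : ℕ} {i j : Fin n} {p : Fin n → ZMod 2}
    (hij : i < j) (hi : p i = 1) (hj : p j = 1) :
    koszulSign (Equiv.swap i j) p = -1 := by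
  have hne : i ≠ j := ne_of_lt hij
  unfold koszulSign
  set F : Fin n → Fin n → ℚ := fun a b =>
    if a < b ∧ Equiv.swap i j b < Equiv.swap i j a ∧ p a = 1 ∧ p b = 1 then (-1 : ℚ) else 1
    with hF
  have hFdef : ∀ a b, F a b =
      if a < b ∧ Equiv.swap i j b < Equiv.swap i j a ∧ p a = 1 ∧ p b = 1 then (-1 : ℚ) else 1 :=
    fun a b => rfl
  have hFij : F i j = -1 := by
    rw [hFdef, Equiv.swap_apply_left, Equiv.swap_apply_right, if_pos ⟨hij, hij, hi, hj⟩]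
  have hkey : ∀ m, m ≠ i → m ≠ j → F i m * F m j = 1 := by
    intro m hmi hmj
    have hsm : Equiv.swap i j m = m := Equiv.swap_apply_of_ne_of_ne hmi hmj
    rw [hFdef, hFdef, hsm, Equiv.swap_apply_left, Equiv.swap_apply_right]
    by_cases hc : i < m ∧ m < j ∧ p m = 1
    · rw [if_pos ⟨hc.1, hc.2.1, hi, hc.2.2⟩, if_pos ⟨hc.2.1, hc.1, hc.2.2, hj⟩]; norm_num
    · rw [if_neg (fun hcon => hc ⟨hcon.1, hcon.2.1, hcon.2.2.2⟩),
        if_neg (fun hcon => hc ⟨hcon.2.1, hcon.1, hcon.2.2.1⟩), mul_one]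
  have hGj : (∏ b : Fin n, F j b) = 1 := by
    refine Finset.prod_eq_one fun b _ => ?_
    rw [hFdef, if_neg]
    rintro ⟨hab, hba, -, -⟩
    have hbi : b ≠ i := fun h => absurd (h ▸ hab) (not_lt.mpr (le_of_lt hij))
    have hbj : b ≠ j := ne_of_gt hab
    rw [Equiv.swap_apply_of_ne_of_ne hbi hbj, Equiv.swap_apply_right] at hba
    exact absurd (lt_trans hij hab) (not_lt.mpr hba.le)
  have hGa : ∀ a, a ≠ i → a ≠ j → (∏ b : Fin n, F a b) = F a j := by
    intro a hai haj
    have hsa : Equiv.swap i j a = a := Equiv.swap_apply_of_ne_of_ne hai haj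
    rw [← Finset.mul_prod_erase Finset.univ (F a) (Finset.mem_univ j), mul_comm]
    have : (∏ b ∈ Finset.univ.erase j, F a b) = 1 := by
      refine Finset.prod_eq_one fun b hb => ?_
      have hbj : b ≠ j := Finset.ne_of_mem_erase hb
      rw [hFdef, if_neg]
      rintro ⟨hab, hba, -, -⟩
      rw [hsa] at hba
      by_cases hbi : b = i
      · subst hbi
        rw [Equiv.swap_apply_left] at hba
        exact absurd (lt_trans hab hij) (not_lt.mpr hba.le)
      · rw [Equiv.swap_apply_of_ne_of_ne hbi hbj] at hba
        exact absurd hba (not_lt.mpr hab.le)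
    rw [this, one_mul]
  have hGi : (∏ b : Fin n, F i b) = F i j * ∏ b ∈ (Finset.univ.erase j).erase i, F i b := by
    rw [← Finset.mul_prod_erase Finset.univ (F i) (Finset.mem_univ j)]
    congr 1
    rw [← Finset.mul_prod_erase (Finset.univ.erase j) (F i)
      (Finset.mem_erase.mpr ⟨hne, Finset.mem_univ i⟩)]
    have : F i i = 1 := by
      rw [hFdef, if_neg]; rintro ⟨h, -, -, -⟩; exact absurd h (lt_irrefl i)
    rw [this, one_mul]
  rw [← Finset.mul_prod_erase Finset.univ _ (Finset.mem_univ i),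
    ← Finset.mul_prod_erase (Finset.univ.erase i) _
      (Finset.mem_erase.mpr ⟨hne.symm, Finset.mem_univ j⟩)]
  have hs : (Finset.univ.erase i).erase j = (Finset.univ.erase j).erase i := by
    rw [Finset.erase_right_comm]
  rw [hGj, one_mul, hGi, hs]
  have hrest : (∏ a ∈ (Finset.univ.erase j).erase i, ∏ b : Fin n, F a b)
      = ∏ a ∈ (Finset.univ.erase j).erase i, F a j := by
    refine Finset.prod_congr rfl fun a ha => ?_
    exact hGa a (Finset.ne_of_mem_erase ha)
      (Finset.ne_of_mem_erase (Finset.mem_of_mem_erase ha))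
  rw [hrest, mul_assoc, ← Finset.prod_mul_distrib]
  have : (∏ m ∈ (Finset.univ.erase j).erase i, (F i m * F m j)) = 1 := by
    refine Finset.prod_eq_one fun m hm => ?_
    exact hkey m (Finset.ne_of_mem_erase hm) (Finset.ne_of_mem_erase (Finset.mem_of_mem_erase hm))
  rw [this, mul_one, hFij]

/-- The Koszul sign of a transposition of two odd positions is `-1`. -/
lemma koszulSign_swap_odd {n : ℕ} {i j : Fin n} {p : Fin n → ZMod 2}
    (hij : i ≠ j) (hi : p i = 1) (hj : p j = 1) :
    koszulSign (Equiv.swap i j) p = -1 := by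
  rcases lt_or_gt_of_ne hij with h | h
  · exact koszulSign_swap_odd_lt h hi hj
  · rw [Equiv.swap_comm]; exact koszulSign_swap_odd_lt h hj hi

/-- Pigeonhole: for a filling of a diagram containing the `(d+1) × (d+1)` square by
`p` even and `q` odd symbols (`p + q = d`), if no column contains a repeated even
symbol, then some row contains a repeated odd symbol. -/
lemma exists_row_pair {n p q d : ℕ} (μ : YoungDiagram) (e : Fin n ≃ μ.cells)
    (hpq : p + q = d)
    (hsq : ∀ i j : ℕ, i ≤ d → j ≤ d → (i, j) ∈ μ)
    (g : Fin n → Fin p ⊕ Fin q)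
    (hcol : ∀ i j : Fin n, i ≠ j → ((e i : ℕ × ℕ)).2 = ((e j : ℕ × ℕ)).2 →
      g i = g j → ¬ (g i).isLeft)
    : ∃ i j : Fin n, i ≠ j ∧ ((e i : ℕ × ℕ)).1 = ((e j : ℕ × ℕ)).1 ∧ g i = g j ∧
      (g i).isRight := by
  by_contra hrow
  push_neg at hrow
  classical
  set T : Finset (Fin n) := Finset.univ.filter
    (fun i => ((e i : ℕ × ℕ)).1 ≤ d ∧ ((e i : ℕ × ℕ)).2 ≤ d) with hT
  have hTcard : (d + 1) * (d + 1) ≤ T.card := by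
    have hmem : ∀ rc : Fin (d+1) × Fin (d+1), ((rc.1 : ℕ), (rc.2 : ℕ)) ∈ μ.cells := by
      intro rc
      rw [YoungDiagram.mem_cells]
      exact hsq _ _ (Nat.lt_succ_iff.mp rc.1.isLt) (Nat.lt_succ_iff.mp rc.2.isLt)
    have := Finset.card_le_card_of_injOn
      (f := fun rc : Fin (d+1) × Fin (d+1) => e.symm ⟨((rc.1 : ℕ), (rc.2 : ℕ)), hmem rc⟩)
      (s := Finset.univ) (t := T) ?_ ?_
    · simpa using this
    · intro rc _
      rw [hT, Finset.mem_coe, Finset.mem_filter]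
      refine ⟨Finset.mem_univ _, ?_⟩
      rw [Equiv.apply_symm_apply]
      exact ⟨Nat.lt_succ_iff.mp rc.1.isLt, Nat.lt_succ_iff.mp rc.2.isLt⟩
    · intro a _ b _ hab
      have := e.symm.injective hab
      have h2 : (((a.1 : ℕ), (a.2 : ℕ)) : ℕ × ℕ) = ((b.1 : ℕ), (b.2 : ℕ)) :=
        congrArg Subtype.val this
      have h3 : (a.1 : ℕ) = b.1 := congrArg Prod.fst h2
      have h4 : (a.2 : ℕ) = b.2 := congrArg Prod.snd h2
      exact Prod.ext (Fin.ext h3) (Fin.ext h4)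
  have hsplit : (T.filter (fun i => (g i).isLeft)).card
      + (T.filter (fun i => ¬ (g i).isLeft)).card = T.card :=
    Finset.card_filter_add_card_filter_not (fun i => (g i).isLeft)
  have h0 : (T.filter (fun i => (g i).isLeft)).card ≤ (d + 1) * p := by
    have := Finset.card_le_card_of_injOn
      (f := fun i => (((e i : ℕ × ℕ)).2, g i))
      (s := T.filter (fun i => (g i).isLeft))
      (t := (Finset.range (d + 1)) ×ˢ (Finset.univ.image Sum.inl)) ?_ ?_
    · calc _ ≤ _ := this
        _ = (d + 1) * p := by
          rw [Finset.card_product, Finset.card_range,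
            Finset.card_image_of_injective _ Sum.inl_injective, Finset.card_univ,
            Fintype.card_fin]
    · intro i hi
      rw [Finset.mem_coe, Finset.mem_filter, hT, Finset.mem_filter] at hi
      rw [Finset.mem_coe, Finset.mem_product]
      constructor
      · exact Finset.mem_range.mpr (Nat.lt_succ_iff.mpr hi.1.2.2)
      · obtain ⟨k, hk⟩ := Sum.isLeft_iff.mp hi.2
        exact Finset.mem_image.mpr ⟨k, Finset.mem_univ _, hk.symm⟩
    · intro a ha b hb hab
      rw [Finset.mem_coe, Finset.mem_filter] at ha hb
      by_contra hne
      simp only [Prod.mk.injEq] at hab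
      exact hcol a b hne hab.1 hab.2 ha.2
  have h1 : (T.filter (fun i => ¬ (g i).isLeft)).card ≤ (d + 1) * q := by
    have := Finset.card_le_card_of_injOn
      (f := fun i => (((e i : ℕ × ℕ)).1, g i))
      (s := T.filter (fun i => ¬ (g i).isLeft))
      (t := (Finset.range (d + 1)) ×ˢ (Finset.univ.image Sum.inr)) ?_ ?_
    · calc _ ≤ _ := this
        _ = (d + 1) * q := by
          rw [Finset.card_product, Finset.card_range,
            Finset.card_image_of_injective _ Sum.inr_injective, Finset.card_univ,
            Fintype.card_fin]
    · intro i hi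
      rw [Finset.mem_coe, Finset.mem_filter, hT, Finset.mem_filter] at hi
      rw [Finset.mem_coe, Finset.mem_product]
      constructor
      · exact Finset.mem_range.mpr (Nat.lt_succ_iff.mpr hi.1.2.1)
      · obtain ⟨k, hk⟩ := Sum.isRight_iff.mp (Sum.not_isLeft.mp hi.2)
        exact Finset.mem_image.mpr ⟨k, Finset.mem_univ _, hk.symm⟩
    · intro a ha b hb hab
      rw [Finset.mem_coe, Finset.mem_filter] at ha hb
      by_contra hne
      simp only [Prod.mk.injEq] at hab
      exact hrow a b hne hab.1 hab.2 (Sum.not_isLeft.mp ha.2)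
  have hfin : (d + 1) * (d + 1) ≤ (d + 1) * d := by
    calc (d + 1) * (d + 1) ≤ T.card := hTcard
      _ = _ := hsplit.symm
      _ ≤ (d + 1) * p + (d + 1) * q := Nat.add_le_add h0 h1
      _ = (d + 1) * d := by rw [← Nat.mul_add, hpq]
  have := Nat.le_of_mul_le_mul_left hfin (Nat.succ_pos d)
  omega

/-- The parity of a symbol: `0` for even (left) symbols, `1` for odd (right) ones. -/
def parityOf {p q : ℕ} (v : Fin p ⊕ Fin q) : ZMod 2 := if v.isLeft then 0 else 1

lemma parityOf_isLeft {p q : ℕ} {v : Fin p ⊕ Fin q} (h : v.isLeft) : parityOf v = 0 := by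
  simp [parityOf, h]

lemma parityOf_isRight {p q : ℕ} {v : Fin p ⊕ Fin q} (h : v.isRight) : parityOf v = 1 := by
  cases v with
  | inl a => simp at h
  | inr a => simp [parityOf]

/-- Pure tensors of basis vectors span the tensor power. -/
lemma span_tprod_basis_eq_top {ι : Type*} [Fintype ι] {X : Type*} [AddCommGroup X]
    [Module ℚ X] (Y : Module.Basis ι ℚ X) (n : ℕ) :
    Submodule.span ℚ (Set.range fun g : Fin n → ι =>
      PiTensorProduct.tprod ℚ (s := fun _ : Fin n => X) (fun i => Y (g i))) = ⊤ := by
  classical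
  rw [eq_top_iff, ← PiTensorProduct.span_tprod_eq_top, Submodule.span_le]
  rintro _ ⟨x, rfl⟩
  have hx : (PiTensorProduct.tprod ℚ (s := fun _ : Fin n => X)) x
      = (PiTensorProduct.tprod ℚ) (fun i => ∑ k : ι, Y.repr (x i) k • Y k) := by
    congr 1
    funext i
    exact (Module.Basis.sum_repr Y (x i)).symm
  rw [hx, MultilinearMap.map_sum]
  refine Submodule.sum_mem _ fun r _ => ?_
  rw [MultilinearMap.map_smul_univ]
  exact Submodule.smul_mem _ _ (Submodule.subset_span ⟨r, rfl⟩)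

end Aux

/-- For a finite-dimensional `ℚ`-super vector space `X` of total dimension
`d`, the Schur functor `S_μ(X)` vanishes for every partition `μ` whose diagram
contains the `(d+1) × (d+1)` square `[1, d+1] × [1, d+1]` (in 0-indexed
coordinates: all cells `(i,j)` with `i ≤ d`, `j ≤ d`). -/
theorem schurPow_eq_bot_of_square_subset {X : Type} [AddCommGroup X]
    [Module ℚ X] [FiniteDimensional ℚ X] (S : SuperStructure X)
    (μ : YoungDiagram) (e : Fin μ.cells.card ≃ μ.cells)
    (ρ : Equiv.Perm (Fin μ.cells.card) →* Module.End ℚ (⨂[ℚ]^μ.cells.card X))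
    (hρ : IsKoszulAction S μ.cells.card ρ)
    (hsq : ∀ i j : ℕ, i ≤ Module.finrank ℚ X → j ≤ Module.finrank ℚ X →
      (i, j) ∈ μ) :
    SchurPow μ e ρ = ⊥ := by
  classical
  rw [SchurPow, LinearMap.range_eq_bot]
  set d := Module.finrank ℚ X with hd
  set p := Module.finrank ℚ S.even with hp
  set q := Module.finrank ℚ S.odd with hq
  have hpq : p + q = d := Submodule.finrank_add_eq_of_isCompl S.isCompl
  set Y : Module.Basis (Fin p ⊕ Fin q) ℚ X :=
    ((Module.finBasis ℚ S.even).prod (Module.finBasis ℚ S.odd)).map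
      (Submodule.prodEquivOfIsCompl _ _ S.isCompl) with hY
  have hYeven : ∀ k, Y (Sum.inl k) ∈ S.even := by
    intro k
    have h1 : Y (Sum.inl k) = ((Module.finBasis ℚ S.even) k : X) := by
      rw [hY, Module.Basis.map_apply, Submodule.coe_prodEquivOfIsCompl',
        Module.Basis.prod_apply_inl_fst, Module.Basis.prod_apply_inl_snd]
      simp
    rw [h1]
    exact SetLike.coe_mem _
  have hYodd : ∀ k, Y (Sum.inr k) ∈ S.odd := by
    intro k
    have h1 : Y (Sum.inr k) = ((Module.finBasis ℚ S.odd) k : X) := by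
      rw [hY, Module.Basis.map_apply, Submodule.coe_prodEquivOfIsCompl',
        Module.Basis.prod_apply_inr_fst, Module.Basis.prod_apply_inr_snd]
      simp
    rw [h1]
    exact SetLike.coe_mem _
  have hmem : ∀ (g : Fin μ.cells.card → Fin p ⊕ Fin q) (i : Fin μ.cells.card),
      Y (g i) ∈ S.hom (parityOf (g i)) := by
    intro g i
    cases hgi : g i with
    | inl a =>
      have : parityOf (Sum.inl a : Fin p ⊕ Fin q) = 0 := parityOf_isLeft rfl
      rw [this, SuperStructure.hom, if_pos rfl]
      exact hYeven a
    | inr a =>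
      have : parityOf (Sum.inr a : Fin p ⊕ Fin q) = 1 := parityOf_isRight rfl
      rw [this, SuperStructure.hom, if_neg (by decide : (1 : ZMod 2) ≠ 0)]
      exact hYodd a
  -- the two pieces of the Young symmetrizer as explicit sums of endomorphisms
  have hφcol : actionAlg ρ (colElem μ e) = ∑ τ ∈ Finset.univ.filter
      (fun τ : Equiv.Perm (Fin μ.cells.card) => ∀ i, ((e (τ i)) : ℕ × ℕ).2 = ((e i) : ℕ × ℕ).2),
      (((Equiv.Perm.sign τ : ℤ) : ℚ)) • ρ τ := by
    rw [colElem, map_sum]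
    refine Finset.sum_congr rfl fun τ _ => ?_
    rw [map_smul]
    congr 1
    exact MonoidAlgebra.lift_of ρ τ
  have hφrow : actionAlg ρ (rowElem μ e) = ∑ σ ∈ Finset.univ.filter
      (fun σ : Equiv.Perm (Fin μ.cells.card) => ∀ i, ((e (σ i)) : ℕ × ℕ).1 = ((e i) : ℕ × ℕ).1),
      ρ σ := by
    rw [rowElem, map_sum]
    refine Finset.sum_congr rfl fun σ _ => ?_
    exact MonoidAlgebra.lift_of ρ σ
  apply LinearMap.ext_on_range (span_tprod_basis_eq_top Y μ.cells.card)
  intro g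
  set x : Fin μ.cells.card → X := fun i => Y (g i) with hx
  set v := PiTensorProduct.tprod ℚ (s := fun _ : Fin μ.cells.card => X) x with hv
  show (actionAlg ρ (youngSym μ e)) v = (0 : Module.End ℚ (⨂[ℚ]^μ.cells.card X)) v
  rw [LinearMap.zero_apply, youngSym, map_mul, Module.End.mul_apply]
  by_cases hcase : ∃ i j : Fin μ.cells.card, i ≠ j ∧ ((e i) : ℕ × ℕ).2 = ((e j) : ℕ × ℕ).2 ∧
      g i = g j ∧ (g i).isLeft
  · -- a column contains a repeated even symbol: already `b_μ` kills the tensor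
    obtain ⟨i, j, hij, hcc, hgg, hleft⟩ := hcase
    have hswapC : ρ (Equiv.swap i j) v = v := by
      rw [hv, hρ (Equiv.swap i j) (fun m => parityOf (g m)) x (hmem g)]
      have h1 : koszulSign (Equiv.swap i j) (fun m => parityOf (g m)) = 1 :=
        koszulSign_swap_even (parityOf_isLeft hleft)
          (parityOf_isLeft (by rw [← hgg]; exact hleft))
      have h2 : (fun m => x ((Equiv.swap i j)⁻¹ m)) = x := by
        funext m
        rw [Equiv.swap_inv]
        rcases eq_or_ne m i with rfl | hmi
        · rw [Equiv.swap_apply_left, hx]; simp only; rw [hgg]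
        rcases eq_or_ne m j with rfl | hmj
        · rw [Equiv.swap_apply_right, hx]; simp only; rw [hgg]
        · rw [Equiv.swap_apply_of_ne_of_ne hmi hmj]
      rw [h1, h2, one_smul]
    have hcol0 : (actionAlg ρ (colElem μ e)) v = 0 := by
      rw [hφcol, LinearMap.sum_apply]
      simp only [LinearMap.smul_apply]
      refine Finset.sum_involution (fun τ _ => τ * Equiv.swap i j) ?_ ?_ ?_ ?_
      · intro τ _
        beta_reduce
        rw [map_mul ρ τ (Equiv.swap i j), Module.End.mul_apply, hswapC,
          Equiv.Perm.sign_mul, Equiv.Perm.sign_swap hij]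
        have hcast : (((Equiv.Perm.sign τ * -1 : ℤˣ) : ℤ) : ℚ)
            = -(((Equiv.Perm.sign τ : ℤ) : ℚ)) := by
          push_cast
          ring
        rw [hcast, neg_smul]
        exact add_neg_cancel _
      · intro τ _ _ hcon
        beta_reduce at hcon
        have h2 : τ (Equiv.swap i j i) = τ i := congrArg (fun π : Equiv.Perm (Fin μ.cells.card) => π i) hcon
        rw [Equiv.swap_apply_left] at h2
        exact hij (τ.injective h2).symm
      · intro τ hτ
        beta_reduce
        rw [Finset.mem_filter] at hτ ⊢
        refine ⟨Finset.mem_univ _, fun m => ?_⟩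
        have h1 := hτ.2 (Equiv.swap i j m)
        rw [show (τ * Equiv.swap i j) m = τ (Equiv.swap i j m) from rfl, h1]
        rcases eq_or_ne m i with rfl | hmi
        · rw [Equiv.swap_apply_left, ← hcc]
        rcases eq_or_ne m j with rfl | hmj
        · rw [Equiv.swap_apply_right, hcc]
        · rw [Equiv.swap_apply_of_ne_of_ne hmi hmj]
      · intro τ _
        beta_reduce
        rw [mul_assoc, Equiv.swap_mul_self, mul_one]
    rw [hcol0, map_zero]
  · -- no column has a repeated even symbol: `a_μ` kills each term of `b_μ · v`
    push_neg at hcase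
    rw [hφcol, LinearMap.sum_apply]
    simp only [LinearMap.smul_apply]
    rw [map_sum]
    refine Finset.sum_eq_zero fun τ hτ => ?_
    rw [Finset.mem_filter] at hτ
    rw [map_smul, hv, hρ τ (fun m => parityOf (g m)) x (hmem g), map_smul]
    set g' : Fin μ.cells.card → Fin p ⊕ Fin q := fun m => g (τ⁻¹ m) with hg'
    have hx' : (fun m => x (τ⁻¹ m)) = fun m => Y (g' m) := rfl
    rw [hx']
    -- find a repeated odd symbol in a row of the rearranged filling
    have hcol' : ∀ i j : Fin μ.cells.card, i ≠ j → ((e i : ℕ × ℕ)).2 = ((e j : ℕ × ℕ)).2 →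
        g' i = g' j → ¬ (g' i).isLeft := by
      intro i j hne hc hg hl
      have hinj : τ⁻¹ i ≠ τ⁻¹ j := fun h => hne (by
        have := congrArg τ h
        rwa [Equiv.Perm.inv_def, Equiv.apply_symm_apply, Equiv.apply_symm_apply] at this)
      have hci : ((e (τ⁻¹ i) : ℕ × ℕ)).2 = ((e i : ℕ × ℕ)).2 := by
        have := hτ.2 (τ⁻¹ i)
        rw [Equiv.Perm.inv_def, Equiv.apply_symm_apply] at this
        exact this.symm
      have hcj : ((e (τ⁻¹ j) : ℕ × ℕ)).2 = ((e j : ℕ × ℕ)).2 := by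
        have := hτ.2 (τ⁻¹ j)
        rw [Equiv.Perm.inv_def, Equiv.apply_symm_apply] at this
        exact this.symm
      exact hcase (τ⁻¹ i) (τ⁻¹ j) hinj (by rw [hci, hcj, hc]) hg hl
    obtain ⟨i, j, hij, hrr, hgg, hright⟩ :=
      exists_row_pair μ e hpq hsq g' hcol'
    have hrow0 : (actionAlg ρ (rowElem μ e))
        (PiTensorProduct.tprod ℚ (s := fun _ : Fin μ.cells.card => X) (fun m => Y (g' m))) = 0 := by
      set w := PiTensorProduct.tprod ℚ (s := fun _ : Fin μ.cells.card => X) (fun m => Y (g' m)) with hw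
      have hswapR : ρ (Equiv.swap i j) w = (-1 : ℚ) • w := by
        rw [hw, hρ (Equiv.swap i j) (fun m => parityOf (g' m)) _ (hmem g')]
        have h1 : koszulSign (Equiv.swap i j) (fun m => parityOf (g' m)) = -1 :=
          koszulSign_swap_odd hij (parityOf_isRight hright)
            (parityOf_isRight (by rw [← hgg]; exact hright))
        have h2 : (fun m => Y (g' ((Equiv.swap i j)⁻¹ m))) = fun m => Y (g' m) := by
          funext m
          rw [Equiv.swap_inv]
          rcases eq_or_ne m i with rfl | hmi
          · rw [Equiv.swap_apply_left, hgg]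
          rcases eq_or_ne m j with rfl | hmj
          · rw [Equiv.swap_apply_right, hgg]
          · rw [Equiv.swap_apply_of_ne_of_ne hmi hmj]
        rw [h1, h2]
      rw [hφrow, LinearMap.sum_apply]
      refine Finset.sum_involution (fun σ _ => σ * Equiv.swap i j) ?_ ?_ ?_ ?_
      · intro σ _
        beta_reduce
        rw [map_mul ρ σ (Equiv.swap i j), Module.End.mul_apply, hswapR, map_smul, neg_smul, one_smul]
        exact add_neg_cancel _
      · intro σ _ _ hcon
        beta_reduce at hcon
        have h2 : σ (Equiv.swap i j i) = σ i := congrArg (fun π : Equiv.Perm (Fin μ.cells.card) => π i) hcon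
        rw [Equiv.swap_apply_left] at h2
        exact hij (σ.injective h2).symm
      · intro σ hσ
        beta_reduce
        rw [Finset.mem_filter] at hσ ⊢
        refine ⟨Finset.mem_univ _, fun m => ?_⟩
        have h1 := hσ.2 (Equiv.swap i j m)
        rw [show (σ * Equiv.swap i j) m = σ (Equiv.swap i j m) from rfl, h1]
        rcases eq_or_ne m i with rfl | hmi
        · rw [Equiv.swap_apply_left, ← hrr]
        rcases eq_or_ne m j with rfl | hmj
        · rw [Equiv.swap_apply_right, hrr]
        · rw [Equiv.swap_apply_of_ne_of_ne hmi hmj]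
      · intro σ _
        beta_reduce
        rw [mul_assoc, Equiv.swap_mul_self, mul_one]
    rw [hrow0, smul_zero, smul_zero]
end

section
/- If S_λ(X) = 0 for a partition λ, then S_μ(X) = 0 for any partition μ whose diagram contains the diagram of λ. -/
open scoped TensorProduct BigOperators

noncomputable section Helpers

open Equiv

variable {X : Type} [AddCommGroup X] [Module ℚ X]

lemma actionAlg_single {n : ℕ} (ρ : Equiv.Perm (Fin n) →* Module.End ℚ (⨂[ℚ]^n X))
    (σ : Equiv.Perm (Fin n)) (c : ℚ) :
    actionAlg ρ (MonoidAlgebra.single σ c) = c • ρ σ :=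
  MonoidAlgebra.lift_single _ _ _

lemma actionAlg_of {n : ℕ} (ρ : Equiv.Perm (Fin n) →* Module.End ℚ (⨂[ℚ]^n X))
    (σ : Equiv.Perm (Fin n)) :
    actionAlg ρ (MonoidAlgebra.of ℚ _ σ) = ρ σ :=
  MonoidAlgebra.lift_of _ _

/-- Generic conjugation of a weighted sum over a filter in a group algebra. -/
lemma conj_filter_sum {N : ℕ} (π : Equiv.Perm (Fin N))
    (P P' : Equiv.Perm (Fin N) → Prop) [DecidablePred P] [DecidablePred P']
    (w : Equiv.Perm (Fin N) → ℚ)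
    (hPP' : ∀ σ, P σ → P' (π * σ * π⁻¹))
    (hP'P : ∀ σ, P' σ → P (π⁻¹ * σ * π))
    (hw : ∀ σ, w (π * σ * π⁻¹) = w σ) :
    (MonoidAlgebra.of ℚ (Equiv.Perm (Fin N)) π) *
        (∑ σ ∈ Finset.univ.filter P, w σ • MonoidAlgebra.of ℚ (Equiv.Perm (Fin N)) σ) *
        (MonoidAlgebra.of ℚ (Equiv.Perm (Fin N)) π⁻¹)
      = ∑ σ ∈ Finset.univ.filter P', w σ • MonoidAlgebra.of ℚ (Equiv.Perm (Fin N)) σ := by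
  rw [Finset.mul_sum, Finset.sum_mul]
  refine Finset.sum_nbij' (fun σ => π * σ * π⁻¹) (fun τ => π⁻¹ * τ * π) ?_ ?_ ?_ ?_ ?_
  · intro a ha
    simp only [Finset.mem_filter, Finset.mem_univ, true_and] at ha ⊢
    exact hPP' a ha
  · intro a ha
    simp only [Finset.mem_filter, Finset.mem_univ, true_and] at ha ⊢
    exact hP'P a ha
  · intro a _; group
  · intro a _; group
  · intro a _
    rw [← hw a, mul_smul_comm, smul_mul_assoc, ← map_mul, ← map_mul]

lemma mulAlgConj {M : Type*} [Monoid M] {π ρ : M} (h : ρ * π = 1) (a b : M) :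
    (π * a * ρ) * (π * b * ρ) = π * (a * b) * ρ := by
  have : π * a * ρ * (π * b * ρ) = π * (a * ((ρ * π) * b)) * ρ := by
    simp only [mul_assoc]
  rw [this, h, one_mul]

/-- The permutation comparing two enumerations. -/
def conjPerm {N : ℕ} {C : Type} (e e' : Fin N ≃ C) : Equiv.Perm (Fin N) :=
  e.trans e'.symm

lemma conjPerm_spec {N : ℕ} {C : Type} (e e' : Fin N ≃ C) (i : Fin N) :
    e' (conjPerm e e' i) = e i := e'.apply_symm_apply (e i)

lemma conjPerm_inv_spec {N : ℕ} {C : Type} (e e' : Fin N ≃ C) (i : Fin N) :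
    e ((conjPerm e e')⁻¹ i) = e' i := by
  have : ((conjPerm e e')⁻¹ i) = e.symm (e' i) := rfl
  rw [this, e.apply_symm_apply]

lemma rowElem_conj (μ : YoungDiagram) (e e' : Fin μ.cells.card ≃ μ.cells) :
    (MonoidAlgebra.of ℚ _ (conjPerm e e')) * rowElem μ e *
      (MonoidAlgebra.of ℚ _ (conjPerm e e')⁻¹) = rowElem μ e' := by
  have hrw : ∀ (f : Fin μ.cells.card ≃ μ.cells), rowElem μ f
      = ∑ σ ∈ Finset.univ.filter
          (fun σ : Equiv.Perm (Fin μ.cells.card) =>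
            ∀ i, ((f (σ i)) : ℕ × ℕ).1 = ((f i) : ℕ × ℕ).1),
        (1 : ℚ) • MonoidAlgebra.of ℚ _ σ := by
    intro f
    rw [rowElem]
    exact Finset.sum_congr rfl (fun _ _ => (one_smul _ _).symm)
  rw [hrw e, hrw e']
  refine conj_filter_sum _ _ _ _ ?_ ?_ (fun _ => rfl)
  · intro σ hσ j
    have h1 : (conjPerm e e' * σ * (conjPerm e e')⁻¹) j
        = conjPerm e e' (σ ((conjPerm e e')⁻¹ j)) := rfl
    rw [h1, conjPerm_spec, hσ]
    conv_rhs => rw [← (show conjPerm e e' ((conjPerm e e')⁻¹ j) = j from Equiv.apply_symm_apply (conjPerm e e') j), conjPerm_spec]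
  · intro σ hσ j
    have h1 : ((conjPerm e e')⁻¹ * σ * conjPerm e e') j
        = (conjPerm e e')⁻¹ (σ (conjPerm e e' j)) := rfl
    rw [h1, conjPerm_inv_spec, hσ]
    conv_rhs => rw [← (show (conjPerm e e')⁻¹ (conjPerm e e' j) = j from Equiv.symm_apply_apply (conjPerm e e') j), conjPerm_inv_spec]

lemma sign_conj {N : ℕ} (π σ : Equiv.Perm (Fin N)) :
    Equiv.Perm.sign (π * σ * π⁻¹) = Equiv.Perm.sign σ := by
  simp only [map_mul, map_inv]
  rw [mul_comm (Equiv.Perm.sign π) (Equiv.Perm.sign σ), mul_assoc,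
    mul_inv_cancel, mul_one]

lemma colElem_conj (μ : YoungDiagram) (e e' : Fin μ.cells.card ≃ μ.cells) :
    (MonoidAlgebra.of ℚ _ (conjPerm e e')) * colElem μ e *
      (MonoidAlgebra.of ℚ _ (conjPerm e e')⁻¹) = colElem μ e' := by
  rw [colElem, colElem]
  refine conj_filter_sum _ _ _
      (fun σ => ((Equiv.Perm.sign σ : ℤ) : ℚ)) ?_ ?_ ?_
  · intro σ hσ j
    have h1 : (conjPerm e e' * σ * (conjPerm e e')⁻¹) j
        = conjPerm e e' (σ ((conjPerm e e')⁻¹ j)) := rfl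
    rw [h1, conjPerm_spec, hσ]
    conv_rhs => rw [← (show conjPerm e e' ((conjPerm e e')⁻¹ j) = j from Equiv.apply_symm_apply (conjPerm e e') j), conjPerm_spec]
  · intro σ hσ j
    have h1 : ((conjPerm e e')⁻¹ * σ * conjPerm e e') j
        = (conjPerm e e')⁻¹ (σ (conjPerm e e' j)) := rfl
    rw [h1, conjPerm_inv_spec, hσ]
    conv_rhs => rw [← (show (conjPerm e e')⁻¹ (conjPerm e e' j) = j from Equiv.symm_apply_apply (conjPerm e e') j), conjPerm_inv_spec]
  · intro σ; rw [sign_conj]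

lemma youngSym_conj (μ : YoungDiagram) (e e' : Fin μ.cells.card ≃ μ.cells) :
    (MonoidAlgebra.of ℚ _ (conjPerm e e')) * youngSym μ e *
      (MonoidAlgebra.of ℚ _ (conjPerm e e')⁻¹) = youngSym μ e' := by
  have h1 : (MonoidAlgebra.of ℚ (Equiv.Perm (Fin μ.cells.card)) (conjPerm e e')⁻¹)
      * (MonoidAlgebra.of ℚ _ (conjPerm e e')) = 1 := by
    rw [← map_mul, inv_mul_cancel, map_one]
  rw [youngSym, youngSym, ← rowElem_conj μ e e', ← colElem_conj μ e e', mulAlgConj h1]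

lemma schurPow_vanish_transfer (μ : YoungDiagram) (e e' : Fin μ.cells.card ≃ μ.cells)
    (ρ : Equiv.Perm (Fin μ.cells.card) →* Module.End ℚ (⨂[ℚ]^μ.cells.card X))
    (h : actionAlg ρ (youngSym μ e) = 0) : actionAlg ρ (youngSym μ e') = 0 := by
  rw [← youngSym_conj μ e e', map_mul, map_mul, h, mul_zero, zero_mul]

end Helpers
noncomputable section Helpers2

open Equiv

variable {X : Type} [AddCommGroup X] [Module ℚ X]

lemma exists_good_equiv (lam μ : YoungDiagram) (hsub : lam ≤ μ)
    (hkn : lam.cells.card ≤ μ.cells.card)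
    (elam : Fin lam.cells.card ≃ lam.cells) :
    ∃ E : Fin μ.cells.card ≃ μ.cells,
      ∀ i : Fin lam.cells.card,
        ((E (Fin.castLE hkn i)) : ℕ × ℕ) = (elam i : ℕ × ℕ) := by
  classical
  have hst : lam.cells ⊆ μ.cells := YoungDiagram.cells_subset_iff.mpr hsub
  set d : Finset (ℕ × ℕ) := μ.cells \ lam.cells with hd
  have hdc : (μ.cells.card - lam.cells.card) = d.card := (Finset.card_sdiff_of_subset hst).symm
  let eB : Fin (μ.cells.card - lam.cells.card) ≃ ↥d := (finCongr hdc).trans d.equivFin.symm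
  have hbij : Function.Bijective
      (Sum.elim (fun a : ↥lam.cells => (⟨a.1, hst a.2⟩ : ↥μ.cells))
        (fun b : ↥d => (⟨b.1, Finset.sdiff_subset b.2⟩ : ↥μ.cells))) := by
    constructor
    · rintro (a | a) (b | b) hab <;>
        simp only [Sum.elim_inl, Sum.elim_inr, Subtype.mk.injEq] at hab
      · exact congrArg Sum.inl (Subtype.ext hab)
      · exfalso
        have hb : (b : ℕ × ℕ) ∈ μ.cells \ lam.cells := b.2
        exact (Finset.mem_sdiff.mp hb).2 (hab ▸ a.2)
      · exfalso
        have hb : (a : ℕ × ℕ) ∈ μ.cells \ lam.cells := a.2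
        exact (Finset.mem_sdiff.mp hb).2 (hab ▸ b.2)
      · exact congrArg Sum.inr (Subtype.ext hab)
    · intro c
      by_cases hc : (c : ℕ × ℕ) ∈ lam.cells
      · exact ⟨Sum.inl ⟨c.1, hc⟩, Subtype.ext rfl⟩
      · exact ⟨Sum.inr ⟨c.1, Finset.mem_sdiff.mpr ⟨c.2, hc⟩⟩, Subtype.ext rfl⟩
  refine ⟨(finCongr (Nat.add_sub_cancel' hkn).symm).trans
      (finSumFinEquiv.symm.trans ((elam.sumCongr eB).trans (Equiv.ofBijective _ hbij))), ?_⟩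
  intro i
  have h1 : (finCongr (Nat.add_sub_cancel' hkn).symm) (Fin.castLE hkn i)
      = Fin.castAdd (μ.cells.card - lam.cells.card) i := by
    apply Fin.ext; rfl
  rw [Equiv.trans_apply, Equiv.trans_apply, Equiv.trans_apply, h1,
    finSumFinEquiv_symm_apply_castAdd, Equiv.sumCongr_apply]
  rfl

/-- The canonical equivalence between `Fin k` and the first `k` elements of `Fin n`. -/
def fLE {k n : ℕ} (hkn : k ≤ n) : Fin k ≃ {j : Fin n // (j : ℕ) < k} where
  toFun i := ⟨Fin.castLE hkn i, i.2⟩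
  invFun j := ⟨(j.1 : ℕ), j.2⟩
  left_inv i := rfl
  right_inv j := Subtype.ext (Fin.ext rfl)

/-- Extension of permutations of `Fin k` to permutations of `Fin n`. -/
def emb {k n : ℕ} (hkn : k ≤ n) : Equiv.Perm (Fin k) →* Equiv.Perm (Fin n) :=
  Equiv.Perm.extendDomainHom (fLE hkn)

lemma emb_castLE {k n : ℕ} (hkn : k ≤ n) (σ : Equiv.Perm (Fin k)) (i : Fin k) :
    emb hkn σ (Fin.castLE hkn i) = Fin.castLE hkn (σ i) :=
  σ.extendDomain_apply_image (fLE hkn) i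

lemma emb_ge {k n : ℕ} (hkn : k ≤ n) (σ : Equiv.Perm (Fin k)) (j : Fin n)
    (hj : ¬ ((j : ℕ) < k)) : emb hkn σ j = j :=
  σ.extendDomain_apply_not_subtype (fLE hkn) hj

lemma emb_lt {k n : ℕ} (hkn : k ≤ n) (σ : Equiv.Perm (Fin k)) (j : Fin n)
    (hj : (j : ℕ) < k) : ((emb hkn σ j : Fin n) : ℕ) < k := by
  have h1 : j = Fin.castLE hkn ⟨(j : ℕ), hj⟩ := Fin.ext rfl
  rw [h1, emb_castLE]
  exact (σ ⟨(j : ℕ), hj⟩).2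

lemma sign_emb {k n : ℕ} (hkn : k ≤ n) (σ : Equiv.Perm (Fin k)) :
    Equiv.Perm.sign (emb hkn σ) = Equiv.Perm.sign σ :=
  Equiv.Perm.sign_extendDomain σ (fLE hkn)

lemma koszulSign_emb {k n : ℕ} (hkn : k ≤ n) (σ : Equiv.Perm (Fin k))
    (p : Fin n → ZMod 2) :
    koszulSign (emb hkn σ) p = koszulSign σ (fun i => p (Fin.castLE hkn i)) := by
  unfold koszulSign
  have hmap : (Finset.univ.filter (fun j : Fin n => (j : ℕ) < k))
      = Finset.univ.map ⟨Fin.castLE hkn, Fin.castLE_injective hkn⟩ := by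
    ext j
    simp only [Finset.mem_filter, Finset.mem_univ, true_and, Finset.mem_map,
      Function.Embedding.coeFn_mk]
    constructor
    · intro hj; exact ⟨⟨(j : ℕ), hj⟩, Fin.ext rfl⟩
    · rintro ⟨i, rfl⟩; exact i.2
  have houter : ∀ i ∈ (Finset.univ : Finset (Fin n)),
      i ∉ Finset.univ.filter (fun j : Fin n => (j : ℕ) < k) →
      (∏ j : Fin n, if i < j ∧ (emb hkn σ) j < (emb hkn σ) i ∧ p i = 1 ∧ p j = 1
        then (-1 : ℚ) else 1) = 1 := by
    intro i _ hi
    simp only [Finset.mem_filter, Finset.mem_univ, true_and] at hi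
    apply Finset.prod_eq_one
    intro j _
    rw [if_neg]
    rintro ⟨h1, h2, -⟩
    have h1' : (i : ℕ) < (j : ℕ) := h1
    rw [emb_ge hkn σ i hi, emb_ge hkn σ j (fun hjk => hi (lt_trans h1' hjk))] at h2
    exact absurd h2 (asymm h1)
  rw [← Finset.prod_subset (Finset.filter_subset _ _) houter]
  have hinner : ∀ i ∈ Finset.univ.filter (fun j : Fin n => (j : ℕ) < k),
      (∏ j : Fin n, if i < j ∧ (emb hkn σ) j < (emb hkn σ) i ∧ p i = 1 ∧ p j = 1
        then (-1 : ℚ) else 1)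
      = ∏ j ∈ Finset.univ.filter (fun j : Fin n => (j : ℕ) < k),
          (if i < j ∧ (emb hkn σ) j < (emb hkn σ) i ∧ p i = 1 ∧ p j = 1
            then (-1 : ℚ) else 1) := by
    intro i hi
    simp only [Finset.mem_filter, Finset.mem_univ, true_and] at hi
    symm
    apply Finset.prod_subset (Finset.filter_subset _ _)
    intro j _ hj
    simp only [Finset.mem_filter, Finset.mem_univ, true_and] at hj
    rw [if_neg]
    rintro ⟨h1, h2, -⟩
    rw [emb_ge hkn σ j hj] at h2
    have h2' : (j : ℕ) < ((emb hkn σ i : Fin n) : ℕ) := h2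
    exact hj (lt_trans h2' (emb_lt hkn σ i hi))
  rw [Finset.prod_congr rfl hinner, hmap, Finset.prod_map]
  apply Finset.prod_congr rfl
  intro a _
  rw [Finset.prod_map]
  apply Finset.prod_congr rfl
  intro b _
  have hlt : ∀ (u v : Fin k), (Fin.castLE hkn u < Fin.castLE hkn v) ↔ u < v :=
    fun u v => Iff.rfl
  simp only [Function.Embedding.coeFn_mk, emb_castLE, hlt]

end Helpers2
noncomputable section Helpers3

open Equiv PiTensorProduct

variable {X : Type} [AddCommGroup X] [Module ℚ X]

lemma insert_update {k n : ℕ} (hkn : k ≤ n) (x : Fin n → X) (y : Fin k → X)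
    (c : Fin k) (v : X) :
    (fun j : Fin n => if h : (j : ℕ) < k then (Function.update y c v) ⟨(j : ℕ), h⟩ else x j)
      = Function.update (fun j : Fin n => if h : (j : ℕ) < k then y ⟨(j : ℕ), h⟩ else x j)
          (Fin.castLE hkn c) v := by
  funext j
  by_cases hj : (j : ℕ) < k
  · by_cases hc : j = Fin.castLE hkn c
    · subst hc
      rw [dif_pos hj]
      have hc' : (⟨((Fin.castLE hkn c : Fin n) : ℕ), hj⟩ : Fin k) = c := Fin.ext rfl
      rw [hc', Function.update_self, Function.update_self]
    · have hc' : (⟨(j : ℕ), hj⟩ : Fin k) ≠ c := by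
        intro h
        exact hc (by rw [← h]; exact Fin.ext rfl)
      rw [Function.update_of_ne hc, dif_pos hj, dif_pos hj, Function.update_of_ne hc']
  · have hc : j ≠ Fin.castLE hkn c := by
      intro h; exact hj (h ▸ c.2)
    rw [Function.update_of_ne hc, dif_neg hj, dif_neg hj]

/-- Inserting fixed vectors `x j` in the slots `j ≥ k`, as a multilinear map. -/
def insertMap {k n : ℕ} (hkn : k ≤ n) (x : Fin n → X) :
    MultilinearMap ℚ (fun _ : Fin k => X) (⨂[ℚ]^n X) where
  toFun y := PiTensorProduct.tprod ℚ
    (fun j : Fin n => if h : (j : ℕ) < k then y ⟨(j : ℕ), h⟩ else x j)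
  map_update_add' {dec} y c a b := by
    rw [Subsingleton.elim dec (instDecidableEqFin k)]
    rw [insert_update hkn x y c (a + b), insert_update hkn x y c a,
      insert_update hkn x y c b]
    exact (PiTensorProduct.tprod ℚ).map_update_add _ _ _ _
  map_update_smul' {dec} y c r a := by
    rw [Subsingleton.elim dec (instDecidableEqFin k)]
    rw [insert_update hkn x y c (r • a), insert_update hkn x y c a]
    exact (PiTensorProduct.tprod ℚ).map_update_smul _ _ _ _

lemma insertMap_tprod {k n : ℕ} (hkn : k ≤ n) (x : Fin n → X) (y : Fin k → X) :
    PiTensorProduct.lift (insertMap hkn x) (PiTensorProduct.tprod ℚ y)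
      = PiTensorProduct.tprod ℚ
          (fun j : Fin n => if h : (j : ℕ) < k then y ⟨(j : ℕ), h⟩ else x j) := by
  rw [PiTensorProduct.lift.tprod]; rfl

lemma key1 {k n : ℕ} (hkn : k ≤ n) (S : SuperStructure X)
    (ρn : Equiv.Perm (Fin n) →* Module.End ℚ (⨂[ℚ]^n X))
    (ρk : Equiv.Perm (Fin k) →* Module.End ℚ (⨂[ℚ]^k X))
    (hρn : IsKoszulAction S n ρn) (hρk : IsKoszulAction S k ρk)
    (σ : Equiv.Perm (Fin k)) (p : Fin n → ZMod 2) (x : Fin n → X)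
    (hx : ∀ i, x i ∈ S.hom (p i)) :
    ρn (emb hkn σ) (PiTensorProduct.tprod ℚ x)
      = PiTensorProduct.lift (insertMap hkn x)
          (ρk σ (PiTensorProduct.tprod ℚ (fun i => x (Fin.castLE hkn i)))) := by
  rw [hρk σ (fun i => p (Fin.castLE hkn i)) _ (fun i => hx _),
    hρn (emb hkn σ) p x hx, map_smul, insertMap_tprod, koszulSign_emb]
  congr 1
  apply congrArg
  funext j
  by_cases hj : (j : ℕ) < k
  · rw [dif_pos hj]
    have h1 : j = Fin.castLE hkn ⟨(j : ℕ), hj⟩ := Fin.ext rfl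
    have h2 : (emb hkn σ)⁻¹ = emb hkn σ⁻¹ := by
      rw [← map_inv]
    rw [h2]
    conv_lhs => rw [h1, emb_castLE]
  · rw [dif_neg hj]
    have h2 : (emb hkn σ)⁻¹ = emb hkn σ⁻¹ := by rw [← map_inv]
    rw [h2, emb_ge hkn σ⁻¹ j hj]

lemma key2 {k n : ℕ} (hkn : k ≤ n) (S : SuperStructure X)
    (ρn : Equiv.Perm (Fin n) →* Module.End ℚ (⨂[ℚ]^n X))
    (ρk : Equiv.Perm (Fin k) →* Module.End ℚ (⨂[ℚ]^k X))
    (hρn : IsKoszulAction S n ρn) (hρk : IsKoszulAction S k ρk)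
    (z : MonoidAlgebra ℚ (Equiv.Perm (Fin k)))
    (p : Fin n → ZMod 2) (x : Fin n → X) (hx : ∀ i, x i ∈ S.hom (p i)) :
    actionAlg ρn (MonoidAlgebra.mapDomainAlgHom ℚ ℚ (emb hkn) z)
        (PiTensorProduct.tprod ℚ x)
      = PiTensorProduct.lift (insertMap hkn x)
          (actionAlg ρk z (PiTensorProduct.tprod ℚ (fun i => x (Fin.castLE hkn i)))) := by
  induction z using MonoidAlgebra.induction_linear with
  | zero => simp
  | add f g hf hg =>
      simp only [map_add, LinearMap.add_apply, hf, hg]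
  | single σ c =>
      have h1 : (MonoidAlgebra.mapDomainAlgHom ℚ ℚ (emb hkn))
          (MonoidAlgebra.single σ c) = MonoidAlgebra.single (emb hkn σ) c := by
        simp [MonoidAlgebra.mapDomainAlgHom, Finsupp.mapDomain_single]
      rw [h1, actionAlg_single, actionAlg_single, LinearMap.smul_apply,
        LinearMap.smul_apply, map_smul, key1 hkn S ρn ρk hρn hρk σ p x hx]

lemma zmod2_sum {M : Type*} [AddCommMonoid M] (f : ZMod 2 → M) :
    ∑ q : ZMod 2, f q = f 0 + f 1 := by
  have h : (Finset.univ : Finset (ZMod 2)) = {0, 1} := by decide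
  rw [h, Finset.sum_insert (by decide), Finset.sum_singleton]

lemma zmod2_cases : ∀ q : ZMod 2, q = 0 ∨ q = 1 := by decide

lemma span_homog (S : SuperStructure X) (n : ℕ) :
    Submodule.span ℚ {t : ⨂[ℚ]^n X | ∃ (p : Fin n → ZMod 2) (x : Fin n → X),
      (∀ i, x i ∈ S.hom (p i)) ∧ t = PiTensorProduct.tprod ℚ x} = ⊤ := by
  rw [eq_top_iff, ← PiTensorProduct.span_tprod_eq_top]
  apply Submodule.span_le.mpr
  rintro t ⟨x, rfl⟩
  have hdec : ∀ i : Fin n, ∃ ev od, ev ∈ S.even ∧ od ∈ S.odd ∧ x i = ev + od := by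
    intro i
    have hmem : x i ∈ S.even ⊔ S.odd := by
      rw [S.isCompl.sup_eq_top]; trivial
    rcases Submodule.mem_sup.mp hmem with ⟨ev, hev, od, hod, h⟩
    exact ⟨ev, od, hev, hod, h.symm⟩
  choose ev od hev hod hxi using hdec
  have hx : x = fun i => ∑ q : ZMod 2, (if q = 0 then ev i else od i) := by
    funext i
    rw [zmod2_sum (fun q => if q = 0 then ev i else od i), if_pos rfl,
      if_neg (by decide : ¬ (1 : ZMod 2) = 0)]
    exact hxi i
  rw [hx, MultilinearMap.map_sum]
  apply Submodule.sum_mem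
  intro r _
  apply Submodule.subset_span
  refine ⟨r, fun i => if r i = 0 then ev i else od i, fun i => ?_, rfl⟩
  dsimp only
  rcases zmod2_cases (r i) with h | h <;> rw [h]
  · rw [if_pos rfl, SuperStructure.hom, if_pos rfl]; exact hev i
  · rw [if_neg (by decide : ¬ (1 : ZMod 2) = 0), SuperStructure.hom,
      if_neg (by decide : ¬ (1 : ZMod 2) = 0)]
    exact hod i

end Helpers3
noncomputable section Helpers4

open Equiv

variable {X : Type} [AddCommGroup X] [Module ℚ X]

lemma perm_pred_mul {N : ℕ} {α : Type*} (v : Fin N → α) (σ τ : Equiv.Perm (Fin N))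
    (hσ : ∀ i, v (σ i) = v i) (hτ : ∀ i, v (τ i) = v i) : ∀ i, v ((σ * τ) i) = v i :=
  fun i => by rw [Equiv.Perm.mul_apply, hσ, hτ]

lemma perm_pred_inv {N : ℕ} {α : Type*} (v : Fin N → α) (σ : Equiv.Perm (Fin N))
    (hσ : ∀ i, v (σ i) = v i) : ∀ i, v (σ⁻¹ i) = v i := fun i => by
  conv_rhs => rw [← (show σ (σ⁻¹ i) = i from Equiv.apply_symm_apply σ i), hσ]

lemma emb_mem_gen {lam : YoungDiagram} {n : ℕ} {C : Type} (hkn : lam.cells.card ≤ n)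
    (elam : Fin lam.cells.card ≃ lam.cells) (E : Fin n ≃ C)
    (f : C → ℕ) (g : lam.cells → ℕ)
    (hE : ∀ i, f (E (Fin.castLE hkn i)) = g (elam i))
    (h : Equiv.Perm (Fin lam.cells.card))
    (hh : ∀ i, g (elam (h i)) = g (elam i)) :
    ∀ j, f (E (emb hkn h j)) = f (E j) := by
  intro j
  by_cases hj : (j : ℕ) < lam.cells.card
  · have h1 : j = Fin.castLE hkn ⟨(j : ℕ), hj⟩ := Fin.ext rfl
    rw [h1, emb_castLE, hE, hE, hh]
  · rw [emb_ge hkn h j hj]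

lemma map_rowElem {n : ℕ} (lam : YoungDiagram) (hkn : lam.cells.card ≤ n)
    (elam : Fin lam.cells.card ≃ lam.cells) :
    MonoidAlgebra.mapDomainAlgHom ℚ ℚ (emb hkn) (rowElem lam elam)
      = ∑ σ ∈ Finset.univ.filter
          (fun σ : Equiv.Perm (Fin lam.cells.card) =>
            ∀ i, ((elam (σ i)) : ℕ × ℕ).1 = ((elam i) : ℕ × ℕ).1),
          MonoidAlgebra.of ℚ (Equiv.Perm (Fin n)) (emb hkn σ) := by
  rw [rowElem, map_sum]
  refine Finset.sum_congr rfl (fun σ _ => ?_)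
  simp [MonoidAlgebra.mapDomainAlgHom, MonoidAlgebra.of_apply, Finsupp.mapDomain_single]

lemma map_colElem {n : ℕ} (lam : YoungDiagram) (hkn : lam.cells.card ≤ n)
    (elam : Fin lam.cells.card ≃ lam.cells) :
    MonoidAlgebra.mapDomainAlgHom ℚ ℚ (emb hkn) (colElem lam elam)
      = ∑ σ ∈ Finset.univ.filter
          (fun σ : Equiv.Perm (Fin lam.cells.card) =>
            ∀ i, ((elam (σ i)) : ℕ × ℕ).2 = ((elam i) : ℕ × ℕ).2),
          ((Equiv.Perm.sign σ : ℤ) : ℚ) •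
            MonoidAlgebra.of ℚ (Equiv.Perm (Fin n)) (emb hkn σ) := by
  rw [colElem, map_sum]
  refine Finset.sum_congr rfl (fun σ _ => ?_)
  rw [map_smul]
  congr 1
  simp [MonoidAlgebra.mapDomainAlgHom, MonoidAlgebra.of_apply, Finsupp.mapDomain_single]

lemma row_absorb (lam μ : YoungDiagram) (hkn : lam.cells.card ≤ μ.cells.card)
    (elam : Fin lam.cells.card ≃ lam.cells) (E : Fin μ.cells.card ≃ μ.cells)
    (hE : ∀ i, ((E (Fin.castLE hkn i)) : ℕ × ℕ) = (elam i : ℕ × ℕ)) :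
    rowElem μ E * MonoidAlgebra.mapDomainAlgHom ℚ ℚ (emb hkn) (rowElem lam elam)
      = (((Finset.univ.filter
          (fun σ : Equiv.Perm (Fin lam.cells.card) =>
            ∀ i, ((elam (σ i)) : ℕ × ℕ).1 = ((elam i) : ℕ × ℕ).1)).card : ℕ) : ℚ)
          • rowElem μ E := by
  rw [map_rowElem, Finset.mul_sum]
  have key : ∀ h ∈ Finset.univ.filter
      (fun σ : Equiv.Perm (Fin lam.cells.card) =>
        ∀ i, ((elam (σ i)) : ℕ × ℕ).1 = ((elam i) : ℕ × ℕ).1),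
      rowElem μ E * MonoidAlgebra.of ℚ (Equiv.Perm (Fin μ.cells.card)) (emb hkn h)
        = rowElem μ E := by
    intro h hh
    simp only [Finset.mem_filter, Finset.mem_univ, true_and] at hh
    have hemb : ∀ j, ((E ((emb hkn h) j)) : ℕ × ℕ).1 = ((E j) : ℕ × ℕ).1 :=
      emb_mem_gen hkn elam E (fun c => (c : ℕ × ℕ).1) (fun c => (c : ℕ × ℕ).1)
        (fun i => by rw [hE]) h hh
    conv_lhs => rw [rowElem, Finset.sum_mul]
    conv_rhs => rw [rowElem]
    refine Finset.sum_nbij' (fun g => g * emb hkn h) (fun g => g * (emb hkn h)⁻¹)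
      ?_ ?_ ?_ ?_ ?_
    · intro g hg
      simp only [Finset.mem_filter, Finset.mem_univ, true_and] at hg ⊢
      exact perm_pred_mul (fun j => ((E j : ℕ × ℕ)).1) g (emb hkn h) hg hemb
    · intro g hg
      simp only [Finset.mem_filter, Finset.mem_univ, true_and] at hg ⊢
      exact perm_pred_mul (fun j => ((E j : ℕ × ℕ)).1) g (emb hkn h)⁻¹ hg (perm_pred_inv (fun j => ((E j : ℕ × ℕ)).1) _ hemb)
    · intro g _; group
    · intro g _; group
    · intro g _; rw [← map_mul]
  rw [Finset.sum_congr rfl key, Finset.sum_const, Nat.cast_smul_eq_nsmul]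

lemma col_absorb (lam μ : YoungDiagram) (hkn : lam.cells.card ≤ μ.cells.card)
    (elam : Fin lam.cells.card ≃ lam.cells) (E : Fin μ.cells.card ≃ μ.cells)
    (hE : ∀ i, ((E (Fin.castLE hkn i)) : ℕ × ℕ) = (elam i : ℕ × ℕ)) :
    MonoidAlgebra.mapDomainAlgHom ℚ ℚ (emb hkn) (colElem lam elam) * colElem μ E
      = (((Finset.univ.filter
          (fun σ : Equiv.Perm (Fin lam.cells.card) =>
            ∀ i, ((elam (σ i)) : ℕ × ℕ).2 = ((elam i) : ℕ × ℕ).2)).card : ℕ) : ℚ)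
          • colElem μ E := by
  rw [map_colElem, Finset.sum_mul]
  have key : ∀ h ∈ Finset.univ.filter
      (fun σ : Equiv.Perm (Fin lam.cells.card) =>
        ∀ i, ((elam (σ i)) : ℕ × ℕ).2 = ((elam i) : ℕ × ℕ).2),
      (((Equiv.Perm.sign h : ℤ) : ℚ) •
          MonoidAlgebra.of ℚ (Equiv.Perm (Fin μ.cells.card)) (emb hkn h)) * colElem μ E
        = colElem μ E := by
    intro h hh
    simp only [Finset.mem_filter, Finset.mem_univ, true_and] at hh
    have hemb : ∀ j, ((E ((emb hkn h) j)) : ℕ × ℕ).2 = ((E j) : ℕ × ℕ).2 :=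
      emb_mem_gen hkn elam E (fun c => (c : ℕ × ℕ).2) (fun c => (c : ℕ × ℕ).2)
        (fun i => by rw [hE]) h hh
    conv_lhs => rw [colElem, Finset.mul_sum]
    conv_rhs => rw [colElem]
    refine Finset.sum_nbij' (fun g => emb hkn h * g) (fun g => (emb hkn h)⁻¹ * g)
      ?_ ?_ ?_ ?_ ?_
    · intro g hg
      simp only [Finset.mem_filter, Finset.mem_univ, true_and] at hg ⊢
      exact perm_pred_mul (fun j => ((E j : ℕ × ℕ)).2) (emb hkn h) g hemb hg
    · intro g hg
      simp only [Finset.mem_filter, Finset.mem_univ, true_and] at hg ⊢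
      exact perm_pred_mul (fun j => ((E j : ℕ × ℕ)).2) (emb hkn h)⁻¹ g (perm_pred_inv (fun j => ((E j : ℕ × ℕ)).2) _ hemb) hg
    · intro g _; group
    · intro g _; group
    · intro g _
      rw [smul_mul_smul, ← map_mul]
      congr 2
      rw [map_mul, sign_emb]
      push_cast
      ring
  rw [Finset.sum_congr rfl key, Finset.sum_const, Nat.cast_smul_eq_nsmul]

end Helpers4

/-- If `S_λ(X) = 0` for a partition `λ`, then `S_μ(X) = 0` for every partition
`μ` whose Young diagram contains the Young diagram of `λ`. Here `X` is a
finite-dimensional `ℚ`-super vector space and the Schur functors are taken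
with respect to the Koszul-signed symmetric group actions on tensor powers. -/
theorem schurPow_eq_bot_of_subset {X : Type} [AddCommGroup X] [Module ℚ X]
    [FiniteDimensional ℚ X] (S : SuperStructure X)
    (ρ : ∀ n : ℕ, Equiv.Perm (Fin n) →* Module.End ℚ (⨂[ℚ]^n X))
    (hρ : ∀ n, IsKoszulAction S n (ρ n))
    (lam μ : YoungDiagram)
    (elam : Fin lam.cells.card ≃ lam.cells) (eμ : Fin μ.cells.card ≃ μ.cells)
    (hsub : lam ≤ μ)
    (hvan : SchurPow lam elam (ρ lam.cells.card) = ⊥) :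
    SchurPow μ eμ (ρ μ.cells.card) = ⊥ := by
  classical
  have hkn : lam.cells.card ≤ μ.cells.card :=
    Finset.card_le_card (YoungDiagram.cells_subset_iff.mpr hsub)
  obtain ⟨E, hE⟩ := exists_good_equiv lam μ hsub hkn elam
  rw [SchurPow, LinearMap.range_eq_bot] at hvan
  rw [SchurPow, LinearMap.range_eq_bot]
  apply schurPow_vanish_transfer μ E eμ
  -- the image of the Young symmetrizer of `lam` acts by zero
  have hmid : actionAlg (ρ μ.cells.card)
      (MonoidAlgebra.mapDomainAlgHom ℚ ℚ (emb hkn) (youngSym lam elam)) = 0 := by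
    apply LinearMap.ext
    intro v
    rw [LinearMap.zero_apply]
    have hv : v ∈ Submodule.span ℚ {t : ⨂[ℚ]^μ.cells.card X |
        ∃ (p : Fin μ.cells.card → ZMod 2) (x : Fin μ.cells.card → X),
          (∀ i, x i ∈ S.hom (p i)) ∧ t = PiTensorProduct.tprod ℚ x} := by
      rw [span_homog S μ.cells.card]; trivial
    refine Submodule.span_induction ?_ ?_ ?_ ?_ hv
    · rintro t ⟨p, x, hx, rfl⟩
      rw [key2 hkn S (ρ μ.cells.card) (ρ lam.cells.card) (hρ μ.cells.card)
        (hρ lam.cells.card) (youngSym lam elam) p x hx, hvan]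
      simp
    · simp
    · intro a b _ _ ha hb; rw [map_add, ha, hb, add_zero]
    · intro c a _ ha; rw [map_smul, ha, smul_zero]
  -- the two cardinalities
  set cR : ℕ := (Finset.univ.filter
    (fun σ : Equiv.Perm (Fin lam.cells.card) =>
      ∀ i, ((elam (σ i)) : ℕ × ℕ).1 = ((elam i) : ℕ × ℕ).1)).card with hcR
  set cC : ℕ := (Finset.univ.filter
    (fun σ : Equiv.Perm (Fin lam.cells.card) =>
      ∀ i, ((elam (σ i)) : ℕ × ℕ).2 = ((elam i) : ℕ × ℕ).2)).card with hcC
  have hcRne : cR ≠ 0 := by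
    apply Finset.card_ne_zero_of_mem (a := 1)
    exact Finset.mem_filter.mpr ⟨Finset.mem_univ _, fun i => rfl⟩
  have hcCne : cC ≠ 0 := by
    apply Finset.card_ne_zero_of_mem (a := 1)
    exact Finset.mem_filter.mpr ⟨Finset.mem_univ _, fun i => rfl⟩
  -- factorization of the Young symmetrizer of `μ`
  have hfact : rowElem μ E *
        MonoidAlgebra.mapDomainAlgHom ℚ ℚ (emb hkn) (youngSym lam elam) * colElem μ E
      = (((cR * cC : ℕ) : ℚ)) • youngSym μ E := by
    rw [youngSym, map_mul]
    have hassoc : rowElem μ E *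
          (MonoidAlgebra.mapDomainAlgHom ℚ ℚ (emb hkn) (rowElem lam elam) *
            MonoidAlgebra.mapDomainAlgHom ℚ ℚ (emb hkn) (colElem lam elam)) * colElem μ E
        = (rowElem μ E * MonoidAlgebra.mapDomainAlgHom ℚ ℚ (emb hkn) (rowElem lam elam)) *
            (MonoidAlgebra.mapDomainAlgHom ℚ ℚ (emb hkn) (colElem lam elam) * colElem μ E) := by
      rw [← mul_assoc, ← mul_assoc, mul_assoc _ _ (colElem μ E)]
    rw [hassoc, row_absorb lam μ hkn elam E hE, col_absorb lam μ hkn elam E hE,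
      ← hcR, ← hcC, smul_mul_assoc, mul_smul_comm, smul_smul, youngSym, Nat.cast_mul]
  have happ := congrArg (actionAlg (ρ μ.cells.card)) hfact
  rw [map_mul, map_mul, hmid, mul_zero, zero_mul, map_smul] at happ
  have hne : (((cR * cC : ℕ)) : ℚ) ≠ 0 :=
    Nat.cast_ne_zero.mpr (Nat.mul_ne_zero hcRne hcCne)
  have := (smul_eq_zero.mp happ.symm).resolve_left hne
  exact this
end
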